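/- arXiv:1802.01776 — 8 statements merged into one kernel-verified Lean document; each statement's English description precedes it below -/
import Mathlib

section
/- If B is an abelian group and n a positive integer such that the kernel of multiplication by n on B is finite for every n, then the subgroup Div(B) of infinitely divisible elements (the image of Hom(ℚ, B) → Hom(ℤ, B) = B) equals the intersection of the subgroups nB over all positive integers n. -/
/-- `Div B`: the set of infinitely divisible elements, i.e. the image of
`Hom(ℚ, B) → Hom(ℤ, B) = B` given by evaluation at `1`. -/
def DivSet (B : Type*) [AddCommGroup B] : Set B :=
  {b : B | ∃ f : ℚ →+ B, f 1 = b}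

open Opposite CategoryTheory

/-- If `q.den ∣ n!`, then `q * n!` is an integer, equal to its numerator. -/
lemma ratA (q : ℚ) (n : ℕ) (h : q.den ∣ n.factorial) :
    ((q * n.factorial).num : ℚ) = q * n.factorial := by
  obtain ⟨k, hk⟩ := h
  have h1 : q * (n.factorial : ℚ) = ((q.num * k : ℤ) : ℚ) := by
    rw [hk]
    push_cast
    rw [← mul_assoc, Rat.mul_den_eq_num]
  rw [h1, Rat.num_intCast]

lemma welldef_aux {B : Type*} [AddCommGroup B] (c : ℕ → B)
    (hc : ∀ n, (n + 1) • c (n + 1) = c n) :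
    ∀ n m : ℕ, n ≤ m → ∃ t : ℕ, n.factorial * t = m.factorial ∧ t • c m = c n := by
  intro n m h
  induction m, h using Nat.le_induction with
  | base => exact ⟨1, by simp, by simp⟩
  | succ m hm ih =>
    obtain ⟨t, ht1, ht2⟩ := ih
    refine ⟨t * (m + 1), ?_, ?_⟩
    · rw [← mul_assoc, ht1, Nat.factorial_succ]; ring
    · rw [mul_smul, hc, ht2]

lemma welldef {B : Type*} [AddCommGroup B] (c : ℕ → B)
    (hc : ∀ n, (n + 1) • c (n + 1) = c n) (q : ℚ) {n m : ℕ} (hnm : n ≤ m)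
    (hn : q.den ∣ n.factorial) :
    (q * n.factorial).num • c n = (q * m.factorial).num • c m := by
  obtain ⟨t, ht1, ht2⟩ := welldef_aux c hc n m hnm
  have hm' : q.den ∣ m.factorial := hn.trans ⟨t, ht1.symm⟩
  have h2 : (((q * n.factorial).num * (t : ℤ) : ℤ) : ℚ) = q * m.factorial := by
    push_cast
    rw [ratA q n hn, mul_assoc, ← Nat.cast_mul, ht1]
  have hnum : (q * m.factorial).num = (q * n.factorial).num * (t : ℤ) := by
    have h3 := ratA q m hm'
    exact_mod_cast h3.trans h2.symm
  rw [hnum, mul_smul, natCast_zsmul, ht2]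

/-- The inverse system `n ↦ {x : B // n! • x = b}` with transition maps given by
multiplication by ratios of factorials. -/
def torFun (B : Type*) [AddCommGroup B] (b : B) : ℕᵒᵖ ⥤ Type _ where
  obj n := {x : B // (unop n).factorial • x = b}
  map {n m} f := TypeCat.ofHom fun x =>
    ⟨((unop n).factorial / (unop m).factorial) • x.1, by
      have h : (unop m) ≤ (unop n) := leOfHom f.unop
      rw [smul_smul, Nat.mul_div_cancel' (Nat.factorial_dvd_factorial h), x.2]⟩
  map_id n := by
    ext x : 3
    apply Subtype.ext
    simp [Nat.div_self (Nat.factorial_pos (unop n))]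
  map_comp {n m k} f g := by
    ext x : 3
    apply Subtype.ext
    have hkm : (unop k) ≤ (unop m) := leOfHom g.unop
    have hmn : (unop m) ≤ (unop n) := leOfHom f.unop
    have d1 := Nat.factorial_dvd_factorial hkm
    have d2 := Nat.factorial_dvd_factorial hmn
    show ((unop n).factorial / (unop k).factorial) • x.1 =
      ((unop m).factorial / (unop k).factorial) •
        (((unop n).factorial / (unop m).factorial) • x.1)
    rw [smul_smul]
    congr 1
    rw [Nat.div_mul_div_comm d1 d2, mul_comm ((unop k).factorial),
      Nat.mul_div_mul_left _ _ (Nat.factorial_pos (unop m))]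

theorem stmt0 (B : Type*) [AddCommGroup B]
    (hfin : ∀ n : ℕ, 0 < n → Finite {b : B // n • b = 0}) :
    DivSet B = ⋂ n ∈ {n : ℕ | 0 < n}, {b : B | ∃ c : B, n • c = b} := by
  ext b
  simp only [Set.mem_iInter, Set.mem_setOf_eq]
  constructor
  · rintro ⟨f, rfl⟩ n hn
    refine ⟨f ((n : ℚ)⁻¹), ?_⟩
    rw [← map_nsmul, nsmul_eq_mul, mul_inv_cancel₀ (by exact_mod_cast hn.ne')]
  · intro hb
    -- every `{x // n! • x = b}` is finite and nonempty
    haveI hNE : ∀ j : ℕᵒᵖ, Nonempty ((torFun B b).obj j) := by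
      intro j
      obtain ⟨x, hx⟩ := hb (unop j).factorial (Nat.factorial_pos _)
      exact ⟨⟨x, hx⟩⟩
    haveI hF : ∀ j : ℕᵒᵖ, Finite ((torFun B b).obj j) := by
      intro j
      obtain ⟨⟨x0, hx0⟩⟩ := hNE j
      haveI := hfin (unop j).factorial (Nat.factorial_pos _)
      refine Finite.of_injective
        (fun x : (torFun B b).obj j =>
          (⟨x.1 - x0, by rw [smul_sub, x.2, hx0, sub_self]⟩ :
            {y : B // (unop j).factorial • y = 0})) ?_
      intro x y hxy
      apply Subtype.ext
      have := congrArg Subtype.val hxy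
      simpa [sub_eq_sub_iff_sub_eq_sub] using this
    obtain ⟨s, hs⟩ := nonempty_sections_of_finite_inverse_system (torFun B b)
    set c : ℕ → B := fun n => (s (op n)).1 with hc_def
    have h1 : ∀ n : ℕ, n.factorial • c n = b := fun n => (s (op n)).2
    have hc : ∀ n : ℕ, (n + 1) • c (n + 1) = c n := by
      intro n
      have hle : (n : ℕ) ≤ n + 1 := Nat.le_succ n
      have := hs (j := op (n + 1)) (j' := op n) (homOfLE hle).op
      have hdiv : (n + 1).factorial / n.factorial = n + 1 := by
        rw [Nat.factorial_succ, Nat.mul_div_cancel _ (Nat.factorial_pos n)]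
      have hv := congrArg Subtype.val this
      show (n + 1) • (s (op (n + 1))).1 = (s (op n)).1
      rw [← hv]
      show (n + 1) • (s (op (n + 1))).1 =
        ((n + 1).factorial / n.factorial) • (s (op (n + 1))).1
      rw [hdiv]
    -- build the homomorphism
    have hden : ∀ q : ℚ, q.den ∣ q.den.factorial :=
      fun q => Nat.dvd_factorial q.pos le_rfl
    refine ⟨{ toFun := fun q => (q * q.den.factorial).num • c q.den
              map_zero' := by simp
              map_add' := ?_ }, ?_⟩
    · intro q r
      set N : ℕ := q.den + r.den + (q + r).den with hN
      have hqN : q.den ≤ N := by omega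
      have hrN : r.den ≤ N := by omega
      have hsN : (q + r).den ≤ N := by omega
      have dq : q.den ∣ N.factorial := Nat.dvd_factorial q.pos hqN
      have dr : r.den ∣ N.factorial := Nat.dvd_factorial r.pos hrN
      have ds : (q + r).den ∣ N.factorial := Nat.dvd_factorial (q + r).pos hsN
      show (( (q+r) * ((q+r).den.factorial : ℚ)).num) • c (q+r).den =
        ((q * (q.den.factorial : ℚ)).num) • c q.den +
        ((r * (r.den.factorial : ℚ)).num) • c r.den
      rw [welldef c hc (q + r) hsN (hden (q + r)),
        welldef c hc q hqN (hden q), welldef c hc r hrN (hden r)]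
      rw [← add_smul]
      congr 1
      have h2 : (((q * N.factorial).num + (r * N.factorial).num : ℤ) : ℚ)
          = (q + r) * N.factorial := by
        push_cast
        rw [ratA q N dq, ratA r N dr]
        ring
      have h3 := ratA (q + r) N ds
      exact_mod_cast h3.trans h2.symm
    · show ((1 : ℚ) * ((1 : ℚ).den.factorial : ℚ)).num • c (1 : ℚ).den = b
      have hd : (1 : ℚ).den = 1 := rfl
      rw [hd]
      norm_num
      have := h1 1
      simpa using this
end

section
/- Let B be an abelian group and l a prime such that the l-torsion subgroup {b ∈ B : lb = 0} is finite. Then the l-primary component of B/Div(B) is a finite group. -/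
/-- The subgroup `Div(B) = Im[Hom(ℚ,B) → Hom(ℤ,B) = B]` of infinitely divisible
elements of an abelian group `B`. -/
def divSub (B : Type*) [AddCommGroup B] : AddSubgroup B where
  carrier := {b : B | ∃ f : ℚ →+ B, f 1 = b}
  zero_mem' := ⟨0, rfl⟩
  add_mem' := by rintro a b ⟨f, rfl⟩ ⟨g, rfl⟩; exact ⟨f + g, rfl⟩
  neg_mem' := by rintro a ⟨f, rfl⟩; exact ⟨-f, rfl⟩

section Helpers

variable {B : Type*} [AddCommGroup B]

/-- a chain construction by recursion with choice -/
noncomputable def chainAux {Q : Type*} (P : ℕ → Q → Prop) (R : Q → Q → Prop)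
    (step : ∀ j x, P j x → ∃ z, P (j + 1) z ∧ R z x) (s : Q) (hs : P 0 s) :
    ∀ k, {x : Q // P k x}
  | 0 => ⟨s, hs⟩
  | (k + 1) =>
    ⟨(step k _ (chainAux P R step s hs k).2).choose,
      (step k _ (chainAux P R step s hs k).2).choose_spec.1⟩

theorem chainAux_spec {Q : Type*} (P : ℕ → Q → Prop) (R : Q → Q → Prop)
    (step : ∀ j x, P j x → ∃ z, P (j + 1) z ∧ R z x) (s : Q) (hs : P 0 s) (k : ℕ) :
    R (chainAux P R step s hs (k + 1)).1 (chainAux P R step s hs k).1 :=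
  (step k _ (chainAux P R step s hs k).2).choose_spec.2

/-- intersection of a decreasing sequence of nonempty finite sets is nonempty -/
theorem iInter_nonempty_of_antitone {X : Type*} (S : ℕ → Set X)
    (hsub : ∀ k, S (k + 1) ⊆ S k) (hfin : (S 0).Finite) (hne : ∀ k, (S k).Nonempty) :
    (⋂ k, S k).Nonempty := by
  have anti : ∀ j k, j ≤ k → S k ⊆ S j := by
    intro j k hjk
    induction k with
    | zero =>
      have : j = 0 := Nat.le_zero.mp hjk
      subst this; exact fun x hx => hx
    | succ k ih =>
      rcases Nat.lt_or_ge j (k + 1) with h | h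
      · exact fun x hx => ih (by omega) (hsub k hx)
      · have : j = k + 1 := by omega
        subst this; exact fun x hx => hx
  have hfink : ∀ k, (S k).Finite := fun k => hfin.subset (anti 0 k (Nat.zero_le _))
  set n : ℕ → ℕ := fun k => (S k).ncard with hn
  obtain ⟨K, hK⟩ : ∃ K, n K = sInf (Set.range n) := Nat.sInf_mem (Set.range_nonempty n)
  obtain ⟨x, hx⟩ := hne K
  refine ⟨x, Set.mem_iInter.mpr fun k => ?_⟩
  rcases le_total k K with h | h
  · exact anti k K h hx
  · have heq : S k = S K := by
      refine Set.eq_of_subset_of_ncard_le (anti K k h) ?_ (hfink K)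
      show n K ≤ n k
      rw [hK]
      exact Nat.sInf_le ⟨k, rfl⟩
    rw [heq]; exact hx

/-- divisibility of divSub -/
theorem divSub_divisible (b : B) (hb : b ∈ divSub B) (n : ℤ) (hn : n ≠ 0) :
    ∃ d ∈ divSub B, n • d = b := by
  obtain ⟨f, rfl⟩ := hb
  refine ⟨f (1 / n), ⟨f.comp (AddMonoidHom.mulRight ((1 : ℚ) / n)), by simp⟩, ?_⟩
  rw [← f.map_zsmul]
  congr 1
  have hn' : (n : ℚ) ≠ 0 := by exact_mod_cast hn
  rw [zsmul_eq_mul]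
  field_simp

theorem finite_pow_torsion (l : ℕ) (h1 : Finite {b : B // l • b = 0}) :
    ∀ k, Finite {b : B // l ^ k • b = 0} := by
  intro k
  induction k with
  | zero =>
    refine Finite.of_injective (fun b => (0 : Fin 1)) ?_
    intro a b _
    have ha := a.2
    have hbb := b.2
    simp only [pow_zero, one_smul] at ha hbb
    exact Subtype.ext (ha.trans hbb.symm)
  | succ k ih =>
    classical
    set T1 := {b : B // l ^ k • b = 0}
    set Tl := {b : B // l • b = 0}
    have : Finite (T1 × Tl) := by infer_instance
    set ψ : {b : B // l ^ (k + 1) • b = 0} → T1 := fun b =>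
      ⟨l • b.1, by rw [smul_smul, ← pow_succ]; exact b.2⟩ with hψ
    set r : T1 → B := fun t =>
      if h : ∃ b : {b : B // l ^ (k + 1) • b = 0}, ψ b = t then (h.choose).1 else 0 with hr
    refine Finite.of_injective (fun b => ((ψ b, ⟨b.1 - r (ψ b), ?_⟩) : T1 × Tl)) ?_
    · have hex : ∃ b' : {b : B // l ^ (k + 1) • b = 0}, ψ b' = ψ b := ⟨b, rfl⟩
      have hval : l • (hex.choose).1 = l • b.1 := congrArg Subtype.val hex.choose_spec
      rw [hr]; simp only [dif_pos hex]
      rw [smul_sub, hval, sub_self]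
    · intro a b h
      have h1' : ψ a = ψ b := congrArg Prod.fst h
      have h2 : a.1 - r (ψ a) = b.1 - r (ψ b) := congrArg Subtype.val (congrArg Prod.snd h)
      apply Subtype.ext
      rw [h1'] at h2
      exact sub_left_inj.mp h2


theorem finite_quot_torsion (l : ℕ) (hl0 : l ≠ 0) (h1 : Finite {b : B // l • b = 0}) (k : ℕ) :
    Finite {x : B ⧸ divSub B // l ^ k • x = 0} := by
  have hfb := finite_pow_torsion l h1 k
  set π : B →+ B ⧸ divSub B := QuotientAddGroup.mk' (divSub B) with hπ
  refine Finite.of_surjective (α := {b : B // l ^ k • b = 0})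
    (fun b => ⟨π b.1, by rw [← map_nsmul, b.2, map_zero]⟩) ?_
  rintro ⟨x, hx⟩
  obtain ⟨c, hc⟩ := QuotientAddGroup.mk'_surjective (divSub B) x
  have hmem : l ^ k • c ∈ divSub B := by
    rw [← QuotientAddGroup.eq_zero_iff (N := divSub B)]
    show π (l ^ k • c) = 0
    rw [map_nsmul, hc, hx]
  obtain ⟨d, hd, hdc⟩ := divSub_divisible (l ^ k • c) hmem ((l : ℤ) ^ k)
    (by positivity)
  refine ⟨⟨c - d, ?_⟩, ?_⟩
  · rw [smul_sub, ← natCast_zsmul d, ← hdc]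
    push_cast
    rw [sub_self]
  · apply Subtype.ext
    show π (c - d) = x
    have hd0 : π d = 0 := (QuotientAddGroup.eq_zero_iff d).mpr hd
    rw [map_sub, hc, hd0, sub_zero]

theorem step_lemma {Q : Type*} [AddCommGroup Q] (l : ℕ)
    (hQfin : ∀ k, {x : Q | l ^ k • x = 0}.Finite) (j : ℕ) (x : Q)
    (hx : ∀ m, ∃ y : Q, l ^ (j + m) • y = 0 ∧ l ^ m • y = x) :
    ∃ z, (∀ m, ∃ y : Q, l ^ (j + 1 + m) • y = 0 ∧ l ^ m • y = z) ∧ l • z = x := by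
  have key : ∀ (a : ℕ) (v : Q), l ^ a • (l • v) = l ^ (a + 1) • v := fun a v => by
    rw [smul_smul, ← pow_succ]
  have key' : ∀ (a : ℕ) (v : Q), l • (l ^ a • v) = l ^ (a + 1) • v := fun a v => by
    rw [smul_smul, ← pow_succ']
  set S : ℕ → Set Q := fun k =>
    {z | (∃ y, l ^ (j + 1 + k) • y = 0 ∧ l ^ k • y = z) ∧ l • z = x} with hS
  have hsub : ∀ k, S (k + 1) ⊆ S k := by
    rintro k z ⟨⟨y, hy1, hy2⟩, hz⟩
    refine ⟨⟨l • y, ?_, ?_⟩, hz⟩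
    · rw [key]; exact hy1
    · rw [key]; exact hy2
  have hne : ∀ k, (S k).Nonempty := by
    intro k
    obtain ⟨y, hy1, hy2⟩ := hx (k + 1)
    refine ⟨l ^ k • y, ⟨y, ?_, rfl⟩, ?_⟩
    · rw [show j + 1 + k = j + (k + 1) by omega]; exact hy1
    · rw [key']; exact hy2
  have hfin : (S 0).Finite := by
    refine (hQfin (j + 1)).subset ?_
    rintro z ⟨⟨y, hy1, hy2⟩, -⟩
    rw [pow_zero, one_smul] at hy2
    subst hy2
    exact hy1
  obtain ⟨z, hz⟩ := iInter_nonempty_of_antitone S hsub hfin hne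
  rw [Set.mem_iInter] at hz
  exact ⟨z, fun m => (hz m).1, (hz 0).2⟩

end Helpers

theorem stmt2 (B : Type*) [AddCommGroup B] (l : ℕ) (hl : l.Prime)
    (hfin : Finite {b : B // l • b = 0}) :
    Finite {x : B ⧸ divSub B // ∃ k : ℕ, l ^ k • x = 0} := by
  classical
  set Q := B ⧸ divSub B with hQdef
  set π : B →+ Q := QuotientAddGroup.mk' (divSub B) with hπ
  have hl0 : l ≠ 0 := hl.ne_zero
  have hQfin : ∀ k, Finite {x : Q // l ^ k • x = 0} :=
    fun k => finite_quot_torsion l hl0 hfin k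
  have hQfinS : ∀ k, {x : Q | l ^ k • x = 0}.Finite := by
    intro k
    have := hQfin k
    exact Set.finite_coe_iff.mp this
  have key : ∀ (a : ℕ) (v : Q), l ^ a • (l • v) = l ^ (a + 1) • v := fun a v => by
    rw [smul_smul, ← pow_succ]
  -- reduce to uniform bound
  suffices hbound : ∃ K, ∀ x : Q, (∃ k : ℕ, l ^ k • x = 0) → l ^ K • x = 0 by
    obtain ⟨K, hK⟩ := hbound
    have := hQfin K
    refine Finite.of_injective
      (fun x : {x : Q // ∃ k : ℕ, l ^ k • x = 0} =>
        (⟨x.1, hK x.1 x.2⟩ : {x : Q // l ^ K • x = 0})) ?_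
    intro a b h
    exact Subtype.ext (by simpa using congrArg Subtype.val h)
  by_contra hcon
  push_neg at hcon
  -- extract s : nonzero, in every l^K • Q[l^(K+1)]
  set V : ℕ → Set Q := fun K =>
    {v | v ≠ 0 ∧ ∃ y, l ^ (1 + K) • y = 0 ∧ l ^ K • y = v} with hV
  have hVsub : ∀ K, V (K + 1) ⊆ V K := by
    rintro K v ⟨hv0, y, hy1, hy2⟩
    refine ⟨hv0, l • y, ?_, ?_⟩
    · rw [key]; rw [show 1 + K + 1 = 1 + (K + 1) by omega]; exact hy1
    · rw [key]; exact hy2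
  have hVne : ∀ K, (V K).Nonempty := by
    intro K
    obtain ⟨x, ⟨k, hk⟩, hxK⟩ := hcon K
    have hexk : ∃ k, l ^ k • x = 0 := ⟨k, hk⟩
    set k₀ := Nat.find hexk with hk₀
    have hk₀0 : l ^ k₀ • x = 0 := Nat.find_spec hexk
    have hmono : ∀ i j, i ≤ j → l ^ i • x = 0 → l ^ j • x = 0 := by
      intro i j hij h0
      rw [show j = (j - i) + i by omega, pow_add, mul_smul, h0, smul_zero]
    have hk₀K : K + 1 ≤ k₀ := by
      by_contra hlt
      exact hxK (hmono k₀ K (by omega) hk₀0)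
    refine ⟨l ^ (k₀ - 1) • x, ?_, l ^ (k₀ - 1 - K) • x, ?_, ?_⟩
    · intro h0
      exact Nat.find_min hexk (m := k₀ - 1) (by omega) h0
    · rw [smul_smul, ← pow_add, show 1 + K + (k₀ - 1 - K) = k₀ by omega]
      exact hk₀0
    · rw [smul_smul, ← pow_add, show K + (k₀ - 1 - K) = k₀ - 1 by omega]
  have hV0fin : (V 0).Finite := by
    refine (hQfinS 1).subset ?_
    rintro v ⟨-, y, hy1, hy2⟩
    rw [pow_zero, one_smul] at hy2
    subst hy2
    exact hy1
  obtain ⟨s, hs⟩ := iInter_nonempty_of_antitone V hVsub hV0fin hVne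
  rw [Set.mem_iInter] at hs
  have hs0 : s ≠ 0 := (hs 0).1
  have hsP : ∀ m, ∃ y : Q, l ^ (1 + m) • y = 0 ∧ l ^ m • y = s :=
    fun m => (hs m).2
  -- build the coherent sequence t in Q
  set P : ℕ → Q → Prop := fun j x => ∀ m, ∃ y : Q, l ^ (j + 1 + m) • y = 0 ∧ l ^ m • y = x
    with hP
  have hstep : ∀ j x, P j x → ∃ z, P (j + 1) z ∧ l • z = x := by
    intro j x hx
    obtain ⟨z, hz1, hz2⟩ := step_lemma l hQfinS (j + 1) x hx
    exact ⟨z, fun m => hz1 m, hz2⟩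
  have hsP' : P 0 s := by
    intro m
    exact hsP m
  set t : ∀ k, {x : Q // P k x} := chainAux P (fun z x => l • z = x) hstep s hsP' with ht
  have ht0 : (t 0).1 = s := rfl
  have htsucc : ∀ k, l • (t (k + 1)).1 = (t k).1 :=
    fun k => chainAux_spec P (fun z x => l • z = x) hstep s hsP' k
  have htor : ∀ k, l ^ (k + 1) • (t k).1 = 0 := by
    intro k
    obtain ⟨y, hy1, hy2⟩ := (t k).2 0
    rw [pow_zero, one_smul] at hy2
    subst hy2
    rw [show k + 1 + 0 = k + 1 by omega] at hy1
    exact hy1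
  -- lift to B
  set P2 : ℕ → B → Prop := fun k b => π b = (t k).1 ∧ l ^ (k + 1) • b = 0 with hP2
  have hstep2 : ∀ k b, P2 k b → ∃ z, P2 (k + 1) z ∧ l • z = b := by
    intro k b ⟨hbπ, hbt⟩
    obtain ⟨c, hc⟩ := QuotientAddGroup.mk'_surjective (divSub B) (t (k + 1)).1
    have hw : l • c - b ∈ divSub B := by
      rw [← QuotientAddGroup.eq_zero_iff (N := divSub B)]
      show π (l • c - b) = 0
      rw [map_sub, map_nsmul]
      have : π c = (t (k + 1)).1 := hc
      rw [this, hbπ, htsucc k, sub_self]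
    obtain ⟨d, hd, hdw⟩ := divSub_divisible _ hw (l : ℤ) (by exact_mod_cast hl0)
    refine ⟨c - d, ⟨?_, ?_⟩, ?_⟩
    · show π (c - d) = (t (k + 1)).1
      have hd0 : π d = 0 := (QuotientAddGroup.eq_zero_iff d).mpr hd
      rw [map_sub, hc, hd0, sub_zero]
    · have hld : l • (c - d) = b := by
        rw [smul_sub, ← natCast_zsmul d, hdw, sub_sub_cancel]
      rw [pow_succ, mul_smul, hld, hbt]
    · rw [smul_sub, ← natCast_zsmul d, hdw, sub_sub_cancel]
  have hbase2 : ∃ b0 : B, P2 0 b0 := by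
    obtain ⟨c, hc⟩ := QuotientAddGroup.mk'_surjective (divSub B) s
    have hls : l • s = 0 := by
      obtain ⟨y, hy1, hy2⟩ := hsP 0
      rw [pow_zero, one_smul] at hy2
      subst hy2
      simpa using hy1
    have hw : l • c ∈ divSub B := by
      rw [← QuotientAddGroup.eq_zero_iff (N := divSub B)]
      show π (l • c) = 0
      rw [map_nsmul]
      have : π c = s := hc
      rw [this, hls]
    obtain ⟨d, hd, hdw⟩ := divSub_divisible _ hw (l : ℤ) (by exact_mod_cast hl0)
    refine ⟨c - d, ?_, ?_⟩
    · show π (c - d) = (t 0).1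
      have hd0 : π d = 0 := (QuotientAddGroup.eq_zero_iff d).mpr hd
      rw [map_sub, hc, hd0, sub_zero, ht0]
    · rw [pow_one, smul_sub, ← natCast_zsmul d, hdw, sub_self]
  obtain ⟨b0, hb0⟩ := hbase2
  set bb : ∀ k, {x : B // P2 k x} := chainAux P2 (fun z x => l • z = x) hstep2 b0 hb0 with hbb
  set b : ℕ → B := fun k => (bb k).1 with hbdef
  have hbsucc : ∀ k, l • b (k + 1) = b k :=
    fun k => chainAux_spec P2 (fun z x => l • z = x) hstep2 b0 hb0 k
  have hbtor : ∀ k, l ^ (k + 1) • b k = 0 := fun k => (bb k).2.2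
  have hbπ : ∀ k, π (b k) = (t k).1 := fun k => (bb k).2.1
  have hbπ0 : π (b 0) = s := by rw [hbπ 0, ht0]
  -- integer versions of torsion/coherence
  have hbtorZ : ∀ k, ((l : ℤ) ^ (k + 1)) • b k = 0 := by
    intro k
    rw [show ((l : ℤ)) ^ (k + 1) = ((l ^ (k + 1) : ℕ) : ℤ) by push_cast; ring,
      natCast_zsmul]
    exact hbtor k
  have hbkZ : ∀ k j, ((l : ℤ) ^ j) • b (k + j) = b k := by
    intro k j
    induction j with
    | zero => rw [pow_zero, one_smul]; rfl
    | succ j ih =>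
      have hstep1 : ((l : ℤ)) • b (k + j + 1) = b (k + j) := by
        rw [show ((l : ℤ)) = ((l : ℕ) : ℤ) from rfl, natCast_zsmul]
        exact hbsucc (k + j)
      calc ((l : ℤ)) ^ (j + 1) • b (k + (j + 1))
          = (l : ℤ) ^ j • (((l : ℤ)) • b (k + j + 1)) := by rw [pow_succ, mul_smul]; rfl
        _ = (l : ℤ) ^ j • b (k + j) := by rw [hstep1]
        _ = b k := ih
  have hrep : ∀ (k K : ℕ), k ≤ K → ∀ a : ℤ, a • b k = (a * (l : ℤ) ^ (K - k)) • b K := by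
    intro k K hkK a
    have h := hbkZ k (K - k)
    rw [show k + (K - k) = K by omega] at h
    rw [mul_smul, h]
  -- the subgroup generated by the b k
  set G : AddSubgroup B :=
    { carrier := {x | ∃ (k : ℕ) (a : ℤ), a • b k = x}
      zero_mem' := ⟨0, 0, zero_smul _ _⟩
      add_mem' := by
        rintro x y ⟨k, a, rfl⟩ ⟨m, c, rfl⟩
        refine ⟨max k m, a * (l : ℤ) ^ (max k m - k) + c * (l : ℤ) ^ (max k m - m), ?_⟩
        rw [add_smul, ← hrep k (max k m) (le_max_left _ _) a,
          ← hrep m (max k m) (le_max_right _ _) c]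
      neg_mem' := by
        rintro x ⟨k, a, rfl⟩
        exact ⟨k, -a, by rw [neg_smul]⟩ } with hG
  -- G is divisible by every prime
  have hdivP : ∀ p : ℕ, p.Prime → ∀ x ∈ G, ∃ y ∈ G, p • y = x := by
    intro p hp x hx
    obtain ⟨k, a, rfl⟩ := hx
    by_cases hpl : p = l
    · subst hpl
      refine ⟨a • b (k + 1), ⟨k + 1, a, rfl⟩, ?_⟩
      rw [smul_comm, hbsucc]
    · have hco : Nat.Coprime p (l ^ (k + 1)) :=
        ((Nat.coprime_primes hp hl).mpr hpl).pow_right _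
      have hbez : (1 : ℤ) = p * Nat.gcdA p (l ^ (k + 1)) +
          ((l ^ (k + 1) : ℕ) : ℤ) * Nat.gcdB p (l ^ (k + 1)) := by
        have h := Nat.gcd_eq_gcd_ab p (l ^ (k + 1))
        rw [Nat.Coprime] at hco
        rw [hco] at h
        exact_mod_cast h
      have hN0 : ((l ^ (k + 1) : ℕ) : ℤ) • b k = 0 := by
        rw [natCast_zsmul]
        exact hbtor k
      refine ⟨(Nat.gcdA p (l ^ (k + 1)) * a) • b k, ⟨k, _, rfl⟩, ?_⟩
      rw [← natCast_zsmul, smul_smul]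
      have key2 : (p : ℤ) * (Nat.gcdA p (l ^ (k + 1)) * a) =
          a - (Nat.gcdB p (l ^ (k + 1)) * a) * ((l ^ (k + 1) : ℕ) : ℤ) := by
        linear_combination a * hbez.symm
      rw [key2, sub_smul, mul_smul, hN0, smul_zero, sub_zero]
  -- hence by every nonzero natural number
  have hdivN : ∀ n : ℕ, n ≠ 0 → ∀ x ∈ G, ∃ y ∈ G, n • y = x := by
    intro n
    induction n using induction_on_primes with
    | zero => intro h; exact absurd rfl h
    | one => intro _ x hx; exact ⟨x, hx, one_smul _ _⟩
    | prime_mul p m hp ih =>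
      intro hpm x hx
      have hm : m ≠ 0 := by
        rintro rfl
        exact hpm (by ring)
      obtain ⟨y, hy, hyx⟩ := ih hm x hx
      obtain ⟨w, hw, hwy⟩ := hdivP p hp y hy
      refine ⟨w, hw, ?_⟩
      rw [mul_comm, mul_smul, hwy, hyx]
  haveI : DivisibleBy ↥G ℕ := by
    refine divisibleByOfSMulRightSurj ↥G ℕ ?_
    intro n hn x
    obtain ⟨y, hy, hyx⟩ := hdivN n hn x.1 x.2
    exact ⟨⟨y, hy⟩, Subtype.ext (by simpa using hyx)⟩
  haveI : DivisibleBy ↥G ℤ := AddGroup.divisibleByIntOfDivisibleByNat ↥G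
  have hmem0 : b 0 ∈ G := ⟨0, 1, one_smul _ _⟩
  obtain ⟨h, hh⟩ := (Module.Baer.of_divisible ↥G).extension_property_addMonoidHom
    (Int.castAddHom ℚ) Int.cast_injective ((zmultiplesHom ↥G) ⟨b 0, hmem0⟩)
  have hb0mem : b 0 ∈ divSub B := by
    refine ⟨(G.subtype).comp h, ?_⟩
    have h1 : h ((Int.castAddHom ℚ) (1 : ℤ)) = (zmultiplesHom ↥G) ⟨b 0, hmem0⟩ 1 := by
      rw [← AddMonoidHom.comp_apply, hh]
    rw [show (Int.castAddHom ℚ) (1 : ℤ) = (1 : ℚ) by simp] at h1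
    show (G.subtype) (h 1) = b 0
    rw [h1]
    simp
  have : π (b 0) = 0 := (QuotientAddGroup.eq_zero_iff _).mpr hb0mem
  rw [hbπ0] at this
  exact hs0 this
end

section
/- Let G be a finite abelian group equipped with a nondegenerate alternating bilinear pairing G × G → ℚ/ℤ (alternating meaning ⟨x,x⟩ = 0 for all x). Then the order of G is a perfect square. -/
lemma coe_div_eq_zero {n : ℕ} (hn : 0 < n) (k : ℤ) :
    ((((k : ℚ) / n) : ℚ) : AddCircle (1:ℚ)) = 0 ↔ (n : ℤ) ∣ k := by
  have hn' : (n:ℚ) ≠ 0 := by positivity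
  rw [AddCircle.coe_eq_zero_iff]
  constructor
  · rintro ⟨z, hz⟩
    refine ⟨z, ?_⟩
    have : (k : ℚ) = (n : ℚ) * z := by
      rw [zsmul_eq_mul, mul_one] at hz
      field_simp at hz
      linarith
    exact_mod_cast this
  · rintro ⟨c, rfl⟩
    refine ⟨c, ?_⟩
    rw [zsmul_eq_mul, mul_one]
    push_cast
    field_simp

lemma torsion_exists {n : ℕ} (hn : 0 < n) (z : AddCircle (1:ℚ)) (hz : n • z = 0) :
    ∃ k : ℤ, z = (((k : ℚ) / n : ℚ) : AddCircle (1:ℚ)) := by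
  obtain ⟨q, rfl⟩ := QuotientAddGroup.mk_surjective z
  have h2 : ((n • q : ℚ) : AddCircle (1:ℚ)) = 0 := by
    rw [← hz]; rfl
  rw [AddCircle.coe_eq_zero_iff] at h2
  obtain ⟨c, hc⟩ := h2
  refine ⟨c, ?_⟩
  congr 1
  have hn' : (n:ℚ) ≠ 0 := by positivity
  rw [zsmul_eq_mul, mul_one] at hc
  rw [nsmul_eq_mul] at hc
  field_simp
  linarith

noncomputable def eHom (n : ℕ) (hn : 0 < n) : ZMod n →+ AddCircle (1:ℚ) :=
  ZMod.lift n ⟨zmultiplesHom _ ((((1:ℚ)/n : ℚ)) : AddCircle (1:ℚ)), by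
    have hn' : (n:ℚ) ≠ 0 := by positivity
    show ((n:ℤ) • (((1:ℚ)/n : ℚ) : AddCircle (1:ℚ))) = 0
    have h1 : ((n:ℤ) • ((1:ℚ)/n) : ℚ) = 1 := by rw [zsmul_eq_mul, Int.cast_natCast]; field_simp
    rw [show ((n:ℤ) • (((1:ℚ)/n:ℚ) : AddCircle (1:ℚ))) = ((((n:ℤ) • ((1:ℚ)/n) : ℚ)) : AddCircle (1:ℚ)) from rfl, h1, AddCircle.coe_eq_zero_iff]
    exact ⟨1, by simp⟩⟩

lemma eHom_coe (n : ℕ) (hn : 0 < n) (m : ℤ) :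
    eHom n hn (m : ZMod n) = (((m:ℚ)/n : ℚ) : AddCircle (1:ℚ)) := by
  rw [eHom, ZMod.lift_coe]
  show (m • (((1:ℚ)/n : ℚ) : AddCircle (1:ℚ))) = _
  rw [show (m • (((1:ℚ)/n:ℚ) : AddCircle (1:ℚ))) = (((m • ((1:ℚ)/n) : ℚ)) : AddCircle (1:ℚ)) from rfl]
  congr 1
  rw [zsmul_eq_mul]
  ring

lemma eHom_injective (n : ℕ) (hn : 0 < n) : Function.Injective (eHom n hn) := by
  rw [injective_iff_map_eq_zero]
  intro a ha
  obtain ⟨m, rfl⟩ := ZMod.intCast_surjective a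
  rw [eHom_coe n hn m, coe_div_eq_zero hn] at ha
  exact_mod_cast (ZMod.intCast_zmod_eq_zero_iff_dvd m n).2 ha

universe u

theorem aux : ∀ (N : ℕ) (G : Type u) [AddCommGroup G] [Fintype G],
    Fintype.card G = N →
    ∀ (b : G →+ G →+ AddCircle (1 : ℚ)),
    (∀ x : G, (∀ y : G, b x y = 0) → x = 0) →
    (∀ x : G, b x x = 0) → IsSquare N := by
  intro N
  induction N using Nat.strong_induction_on with
  | _ N ih =>
  intro G _ _ hcard b hnd halt
  classical
  -- trivial case
  by_cases htriv : Subsingleton G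
  · have : Fintype.card G = 1 := Fintype.card_eq_one_iff.2 ⟨0, fun g => Subsingleton.elim _ _⟩
    exact ⟨1, by omega⟩
  have hnontriv : Nontrivial G := not_subsingleton_iff_nontrivial.1 htriv
  -- injectivity of b
  have binj : Function.Injective b := by
    rw [injective_iff_map_eq_zero]
    intro a ha
    exact hnd a (fun y => by rw [ha]; rfl)
  -- skew symmetry
  have skew : ∀ u v : G, b u v = - b v u := by
    intro u v
    have h := halt (u + v)
    simp only [map_add, AddMonoidHom.add_apply, halt u, halt v] at h
    have h2 : b u v + b v u = 0 := by
      rw [← h]; abel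
    exact eq_neg_of_add_eq_zero_left h2
  -- exponent
  set n := AddMonoid.exponent G with hndef
  have hexp : AddMonoid.ExponentExists G := AddMonoid.ExponentExists.of_finite
  have hn : 0 < n := AddMonoid.exponent_pos.2 hexp
  have hne1 : n ≠ 1 := by
    intro h1
    obtain ⟨g, hg⟩ := exists_ne (0 : G)
    have : addOrderOf g ∣ 1 := by
      rw [← h1]
      exact AddMonoid.addOrder_dvd_exponent g
    rw [Nat.dvd_one, AddMonoid.addOrderOf_eq_one_iff] at this
    exact hg this
  have hn2 : 2 ≤ n := by omega
  obtain ⟨x, hx⟩ := AddMonoid.exists_addOrderOf_eq_exponent hexp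
  -- torsion of values
  have htors : ∀ u g : G, n • b u g = 0 := by
    intro u g
    have h1 : n • b u = 0 := by
      have : addOrderOf (b u) ∣ n := by
        rw [addOrderOf_injective b binj u]
        exact AddMonoid.addOrder_dvd_exponent u
      obtain ⟨c, hc⟩ := this
      rw [hc, mul_nsmul, addOrderOf_nsmul_eq_zero, smul_zero]
    calc n • b u g = (n • b u) g := rfl
    _ = 0 := by rw [h1]; rfl
  -- the hom psi : G →+ ZMod n with eHom ∘ psi = b x
  have hpsi0 : ∀ g : G, ∃ k : ZMod n, eHom n hn k = b x g := by
    intro g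
    obtain ⟨k, hk⟩ := torsion_exists hn (b x g) (htors x g)
    exact ⟨(k : ZMod n), by rw [eHom_coe n hn k, ← hk]⟩
  set psifun : G → ZMod n := fun g => Classical.choose (hpsi0 g) with hpsifun
  have hpsival : ∀ g : G, eHom n hn (psifun g) = b x g := fun g => Classical.choose_spec (hpsi0 g)
  set psi : G →+ ZMod n := AddMonoidHom.mk' psifun (by
    intro a c
    apply eHom_injective n hn
    rw [map_add, hpsival, hpsival, hpsival, map_add]) with hpsidef
  have hpsival' : ∀ g : G, eHom n hn (psi g) = b x g := hpsival
  -- psi is surjective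
  have hpsisurj : ∃ y : G, psi y = 1 := by
    have hmem : ∀ g : G, psi g ∈ psi.range := fun g => ⟨g, rfl⟩
    set H := psi.range with hH
    have hHcard : ∀ g : G, (Nat.card H) • psi g = 0 := by
      intro g
      have h4 : (Nat.card H) • (⟨psi g, hmem g⟩ : H) = 0 := by
        have : Fintype H := Fintype.ofFinite _
        rw [Nat.card_eq_fintype_card]
        exact card_nsmul_eq_zero
      have h5 := congrArg (fun z : H => (z : ZMod n)) h4
      simp only [AddSubgroup.coe_nsmul, ZeroMemClass.coe_zero] at h5
      exact h5
    -- n divides Nat.card H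
    have hdvd : n ∣ Nat.card H := by
      have hordx : addOrderOf (b x) = n := by
        rw [addOrderOf_injective b binj x, hx, hndef]
      have h6 : (Nat.card H) • (b x) = 0 := by
        ext g
        rw [AddMonoidHom.nsmul_apply, ← hpsival' g, ← map_nsmul, hHcard g, map_zero]
        rfl
      have h7 := addOrderOf_dvd_of_nsmul_eq_zero h6
      rwa [hordx] at h7
    have hle : Nat.card H ≤ n := by
      have := Nat.card_le_card_of_injective _ (AddSubgroup.subtype_injective H)
      rwa [Nat.card_zmod] at this
    have hcardH : Nat.card H = Nat.card (ZMod n) := by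
      rw [Nat.card_zmod]
      exact Nat.le_antisymm hle (Nat.le_of_dvd Nat.card_pos hdvd)
    have htop : H = ⊤ := AddSubgroup.eq_top_of_card_eq H hcardH
    have : (1 : ZMod n) ∈ H := htop ▸ AddSubgroup.mem_top _
    exact this
  obtain ⟨y, hy⟩ := hpsisurj
  have hbxy : b x y = eHom n hn 1 := by rw [← hpsival' y, hy]
  -- the hom F : ZMod n × ZMod n →+ G
  have hnx : (zmultiplesHom G x) (n : ℤ) = 0 := by
    show (n : ℤ) • x = 0
    rw [natCast_zsmul, hndef, ← hx, addOrderOf_nsmul_eq_zero]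
  have hny : (zmultiplesHom G y) (n : ℤ) = 0 := by
    show (n : ℤ) • y = 0
    rw [natCast_zsmul]
    obtain ⟨c, hc⟩ : addOrderOf y ∣ n := by
      rw [hndef]; exact AddMonoid.addOrder_dvd_exponent y
    rw [hc, mul_nsmul, addOrderOf_nsmul_eq_zero, smul_zero]
  set φx : ZMod n →+ G := ZMod.lift n ⟨zmultiplesHom G x, hnx⟩ with hφx
  set φy : ZMod n →+ G := ZMod.lift n ⟨zmultiplesHom G y, hny⟩ with hφy
  set F : ZMod n × ZMod n →+ G :=
    φx.comp (AddMonoidHom.fst _ _) + φy.comp (AddMonoidHom.snd _ _) with hF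
  have hFval : ∀ a c : ℤ, F ((a : ZMod n), (c : ZMod n)) = a • x + c • y := by
    intro a c
    show φx _ + φy _ = _
    simp only [AddMonoidHom.coe_fst, AddMonoidHom.coe_snd]
    rw [hφx, hφy, ZMod.lift_coe, ZMod.lift_coe]
    rfl
  have hbxF : ∀ a c : ℤ, b x (F ((a : ZMod n), (c : ZMod n))) = eHom n hn (c : ZMod n) := by
    intro a c
    rw [hFval, map_add, map_zsmul, map_zsmul, halt x, smul_zero, zero_add, hbxy,
      ← map_zsmul]
    congr 1
    rw [zsmul_eq_mul, mul_one]
  have hbyF : ∀ a c : ℤ, b y (F ((a : ZMod n), (c : ZMod n))) = eHom n hn ((-a : ℤ) : ZMod n) := by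
    intro a c
    rw [hFval, map_add, map_zsmul, map_zsmul, halt y, smul_zero, add_zero, skew y x, hbxy,
      smul_neg, ← neg_zsmul, ← map_zsmul]
    congr 1
    rw [zsmul_eq_mul, mul_one]
  have hFzero : ∀ p : ZMod n × ZMod n, b x (F p) = 0 → b y (F p) = 0 → p = 0 := by
    rintro ⟨a0, c0⟩ h1 h2
    obtain ⟨a, rfl⟩ := ZMod.intCast_surjective a0
    obtain ⟨c, rfl⟩ := ZMod.intCast_surjective c0
    rw [hbxF] at h1
    rw [hbyF] at h2
    have hc : (c : ZMod n) = 0 := eHom_injective n hn (by rw [h1, map_zero])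
    have ha : ((-a : ℤ) : ZMod n) = 0 := eHom_injective n hn (by rw [h2, map_zero])
    have ha' : (a : ZMod n) = 0 := by
      have := congrArg Neg.neg ha
      push_cast at this ⊢
      simpa using this
    rw [Prod.mk_eq_zero]
    exact ⟨ha', hc⟩
  have Finj : Function.Injective F := by
    rw [injective_iff_map_eq_zero]
    intro p hp
    exact hFzero p (by rw [hp, map_zero]) (by rw [hp, map_zero])
  -- the orthogonal complement
  set K : AddSubgroup G := (b x).ker ⊓ (b y).ker with hK
  have hmemK : ∀ g : G, g ∈ K ↔ b x g = 0 ∧ b y g = 0 := by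
    intro g
    rw [hK, AddSubgroup.mem_inf, AddMonoidHom.mem_ker, AddMonoidHom.mem_ker]
  have hdecomp : ∀ g : G, ∃ p : ZMod n × ZMod n, g - F p ∈ K := by
    intro g
    obtain ⟨k, hk⟩ := torsion_exists hn (b x g) (htors x g)
    obtain ⟨l, hl⟩ := torsion_exists hn (b y g) (htors y g)
    rw [← eHom_coe n hn] at hk hl
    refine ⟨(((-l : ℤ) : ZMod n), ((k : ℤ) : ZMod n)), ?_⟩
    rw [hmemK]
    constructor
    · rw [map_sub, hbxF, hk, sub_self]
    · rw [map_sub, hbyF, hl, neg_neg, sub_self]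
  have htrivint : ∀ z : G, z ∈ F.range → z ∈ K → z = 0 := by
    rintro z ⟨p, rfl⟩ hzK
    rw [hmemK] at hzK
    rw [hFzero p hzK.1 hzK.2, map_zero]
  -- the bijection
  set Φ : F.range × K → G := fun q => (q.1 : G) + (q.2 : G) with hΦ
  have Φbij : Function.Bijective Φ := by
    constructor
    · rintro ⟨⟨z1, hz1⟩, ⟨w1, hw1⟩⟩ ⟨⟨z2, hz2⟩, ⟨w2, hw2⟩⟩ h
      have h' : z1 + w1 = z2 + w2 := h
      have hz : z1 - z2 = w2 - w1 := by
        rw [sub_eq_sub_iff_add_eq_add, h', add_comm]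
      have hzr : z1 - z2 ∈ F.range := sub_mem hz1 hz2
      have hzk : z1 - z2 ∈ K := by rw [hz]; exact sub_mem hw2 hw1
      have h0 : z1 - z2 = 0 := htrivint _ hzr hzk
      have hz12 : z1 = z2 := by
        have := sub_eq_zero.mp h0
        exact this
      have hw12 : w1 = w2 := by
        have h9 : w2 - w1 = 0 := by rw [← hz, h0]
        exact (sub_eq_zero.mp h9).symm
      simp [Prod.ext_iff, Subtype.ext_iff, hz12, hw12]
    · intro g
      obtain ⟨p, hp⟩ := hdecomp g
      refine ⟨(⟨F p, ⟨p, rfl⟩⟩, ⟨g - F p, hp⟩), ?_⟩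
      simp [hΦ]
  -- cardinalities
  have hcard1 : Nat.card G = (n * n) * Nat.card K := by
    have h1 : Nat.card G = Nat.card (F.range × K) := (Nat.card_congr (Equiv.ofBijective Φ Φbij)).symm
    have h2 : Nat.card F.range = n * n := by
      have := Nat.card_congr (Equiv.ofBijective F.rangeRestrict
        ⟨fun p q hpq => Finj (by exact congrArg Subtype.val hpq), F.rangeRestrict_surjective⟩)
      rw [← this, Nat.card_prod, Nat.card_zmod]
    rw [h1, Nat.card_prod, h2]
  -- the restricted pairing
  set b' : K →+ K →+ AddCircle (1:ℚ) := ((b.comp K.subtype).flip.comp K.subtype).flip with hb'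
  have hb'val : ∀ z w : K, b' z w = b (z : G) (w : G) := fun z w => rfl
  have hnd' : ∀ z : K, (∀ w : K, b' z w = 0) → z = 0 := by
    intro z hz
    have hzK := (hmemK (z : G)).1 z.2
    apply Subtype.ext
    apply hnd
    intro g
    obtain ⟨p, hp⟩ := hdecomp g
    obtain ⟨a0, c0⟩ := p
    obtain ⟨a, rfl⟩ := ZMod.intCast_surjective a0
    obtain ⟨c, rfl⟩ := ZMod.intCast_surjective c0
    have h1 : b (z : G) (g - F ((a : ZMod n), (c : ZMod n))) = 0 := hz ⟨g - F _, hp⟩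
    have h2 : b (z : G) (F ((a : ZMod n), (c : ZMod n))) = 0 := by
      rw [hFval, map_add, map_zsmul, map_zsmul, skew _ x, skew _ y, hzK.1, hzK.2,
        neg_zero, smul_zero, smul_zero, add_zero]
    rw [map_sub, h2, sub_zero] at h1
    exact h1
  have halt' : ∀ z : K, b' z z = 0 := fun z => halt (z : G)
  haveI : Fintype K := Fintype.ofFinite _
  have hNcard : N = n * n * Nat.card K := by
    rw [← hcard1, Nat.card_eq_fintype_card, hcard]
  have hKpos : 0 < Nat.card K := Nat.card_pos
  have h4 : 4 ≤ n * n := by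
    calc (4:ℕ) = 2 * 2 := rfl
    _ ≤ n * n := Nat.mul_le_mul hn2 hn2
  have hlt : Nat.card K < N := by
    rw [hNcard]
    exact (Nat.lt_mul_iff_one_lt_left hKpos).2 (by omega)
  obtain ⟨r, hr⟩ := ih (Nat.card K) hlt K Nat.card_eq_fintype_card.symm b' hnd' halt'
  exact ⟨n * r, by rw [hNcard, hr]; ring⟩

theorem stmt3 (G : Type*) [AddCommGroup G] [Fintype G]
    (b : G →+ G →+ AddCircle (1 : ℚ))
    (hnd : ∀ x : G, (∀ y : G, b x y = 0) → x = 0)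
    (halt : ∀ x : G, b x x = 0) :
    IsSquare (Fintype.card G) := by
  exact aux (Fintype.card G) G rfl b hnd halt
end

section
/- Let H be a free ℤ_l-module of finite rank with an automorphism σ and a perfect σ-invariant symmetric ℤ_l-bilinear form (,). For a, b in the torsion subgroup of H/(1−σ)H, choose u ∈ H with a = u mod (1−σ)H and v ∈ H ⊗ ℚ_l with v − σv ∈ H and b = (v − σv) mod (1−σ)H, and set (a,b)_B := (u,v) mod ℤ_l ∈ ℚ_l/ℤ_l. Then (a,b)_B is well-defined, independent of the choices of u and v. -/
open TensorProduct

section Aux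

variable {l : ℕ} [Fact l.Prime]
    {H : Type*} [AddCommGroup H] [Module ℤ_[l] H]

private lemma aux_tmul (B : H →ₗ[ℤ_[l]] H →ₗ[ℤ_[l]] ℤ_[l]) (x y : H) :
    LinearMap.BilinForm.baseChange ℚ_[l] B ((1 : ℚ_[l]) ⊗ₜ[ℤ_[l]] x)
      ((1 : ℚ_[l]) ⊗ₜ[ℤ_[l]] y) = ((B x y : ℤ_[l]) : ℚ_[l]) := by
  rw [LinearMap.BilinForm.baseChange_tmul, mul_one, Algebra.smul_def,
    PadicInt.algebraMap_apply, mul_one]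

private lemma aux_fix (σ : H ≃ₗ[ℤ_[l]] H) (x : ℚ_[l] ⊗[ℤ_[l]] H) :
    LinearMap.baseChange ℚ_[l] σ.symm.toLinearMap
      (LinearMap.baseChange ℚ_[l] σ.toLinearMap x) = x := by
  rw [← LinearMap.comp_apply, ← LinearMap.baseChange_comp]
  have h : σ.symm.toLinearMap ∘ₗ σ.toLinearMap = LinearMap.id := by ext; simp
  rw [h, LinearMap.baseChange_id, LinearMap.id_apply]

private lemma aux_fix' (σ : H ≃ₗ[ℤ_[l]] H) (x : ℚ_[l] ⊗[ℤ_[l]] H) :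
    LinearMap.baseChange ℚ_[l] σ.toLinearMap
      (LinearMap.baseChange ℚ_[l] σ.symm.toLinearMap x) = x := by
  rw [← LinearMap.comp_apply, ← LinearMap.baseChange_comp]
  have h : σ.toLinearMap ∘ₗ σ.symm.toLinearMap = LinearMap.id := by ext; simp
  rw [h, LinearMap.baseChange_id, LinearMap.id_apply]

private lemma aux_inv (σ : H ≃ₗ[ℤ_[l]] H)
    (B : H →ₗ[ℤ_[l]] H →ₗ[ℤ_[l]] ℤ_[l])
    (hinv : ∀ x y : H, B (σ x) (σ y) = B x y)
    (x y : ℚ_[l] ⊗[ℤ_[l]] H) :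
    LinearMap.BilinForm.baseChange ℚ_[l] B
        (LinearMap.baseChange ℚ_[l] σ.toLinearMap x)
        (LinearMap.baseChange ℚ_[l] σ.toLinearMap y) =
      LinearMap.BilinForm.baseChange ℚ_[l] B x y := by
  induction x using TensorProduct.induction_on with
  | zero => simp
  | add x₁ x₂ hx₁ hx₂ => simp only [map_add, LinearMap.add_apply, hx₁, hx₂]
  | tmul a m =>
    induction y using TensorProduct.induction_on with
    | zero => simp
    | add y₁ y₂ hy₁ hy₂ => simp only [map_add, hy₁, hy₂]
    | tmul b n =>
      simp only [LinearMap.baseChange_tmul, LinearEquiv.coe_coe,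
        LinearMap.BilinForm.baseChange_tmul, hinv]

private lemma aux_conj (σ : H ≃ₗ[ℤ_[l]] H)
    (B : H →ₗ[ℤ_[l]] H →ₗ[ℤ_[l]] ℤ_[l])
    (hinv : ∀ x y : H, B (σ x) (σ y) = B x y)
    (x y : ℚ_[l] ⊗[ℤ_[l]] H) :
    LinearMap.BilinForm.baseChange ℚ_[l] B
        (LinearMap.baseChange ℚ_[l] σ.toLinearMap x) y =
      LinearMap.BilinForm.baseChange ℚ_[l] B x
        (LinearMap.baseChange ℚ_[l] σ.symm.toLinearMap y) := by
  conv_lhs => rw [← aux_fix' σ y]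
  rw [aux_inv σ B hinv]

end Aux

theorem stmt6 (l : ℕ) [Fact l.Prime]
    (H : Type*) [AddCommGroup H] [Module ℤ_[l] H]
    [Module.Free ℤ_[l] H] [Module.Finite ℤ_[l] H]
    (σ : H ≃ₗ[ℤ_[l]] H)
    (B : H →ₗ[ℤ_[l]] H →ₗ[ℤ_[l]] ℤ_[l])
    (hsymm : ∀ x y : H, B x y = B y x)
    (hinv : ∀ x y : H, B (σ x) (σ y) = B x y)
    (hperf : Function.Bijective fun x : H => B x)
    (a b : H ⧸ LinearMap.range (LinearMap.id - σ.toLinearMap))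
    (ha : ∃ k : ℕ, l ^ k • a = 0) (hb : ∃ k : ℕ, l ^ k • b = 0)
    (u₁ u₂ : H)
    (hu₁ : Submodule.Quotient.mk u₁ = a) (hu₂ : Submodule.Quotient.mk u₂ = a)
    (v₁ v₂ : ℚ_[l] ⊗[ℤ_[l]] H) (h₁ h₂ : H)
    (hv₁ : v₁ - LinearMap.baseChange ℚ_[l] σ.toLinearMap v₁ = (1 : ℚ_[l]) ⊗ₜ[ℤ_[l]] h₁)
    (hv₂ : v₂ - LinearMap.baseChange ℚ_[l] σ.toLinearMap v₂ = (1 : ℚ_[l]) ⊗ₜ[ℤ_[l]] h₂)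
    (hb₁ : Submodule.Quotient.mk h₁ = b) (hb₂ : Submodule.Quotient.mk h₂ = b) :
    ∃ c : ℤ_[l],
      LinearMap.BilinForm.baseChange ℚ_[l] B ((1 : ℚ_[l]) ⊗ₜ[ℤ_[l]] u₁) v₁ -
        LinearMap.BilinForm.baseChange ℚ_[l] B ((1 : ℚ_[l]) ⊗ₜ[ℤ_[l]] u₂) v₂ =
        (c : ℚ_[l]) := by
  set B' := LinearMap.BilinForm.baseChange ℚ_[l] B with hB'
  set σ' := LinearMap.baseChange ℚ_[l] σ.toLinearMap with hσ'
  set τ := LinearMap.baseChange ℚ_[l] σ.symm.toLinearMap with hτ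
  -- extract w with u₁ - u₂ = w - σ w
  have hwmem : u₁ - u₂ ∈ LinearMap.range (LinearMap.id - σ.toLinearMap) := by
    rw [← Submodule.Quotient.eq (p := LinearMap.range (LinearMap.id - σ.toLinearMap))]
    rw [hu₁, hu₂]
  obtain ⟨w, hw⟩ := hwmem
  simp only [LinearMap.sub_apply, LinearMap.id_apply, LinearEquiv.coe_coe] at hw
  -- extract z with h₁ - h₂ = z - σ z
  have hzmem : h₁ - h₂ ∈ LinearMap.range (LinearMap.id - σ.toLinearMap) := by
    rw [← Submodule.Quotient.eq (p := LinearMap.range (LinearMap.id - σ.toLinearMap))]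
    rw [hb₁, hb₂]
  obtain ⟨z, hz⟩ := hzmem
  simp only [LinearMap.sub_apply, LinearMap.id_apply, LinearEquiv.coe_coe] at hz
  -- torsion: l^k • u₂ = t - σ t
  obtain ⟨k, hk⟩ := ha
  have htmem : (l : ℤ_[l]) ^ k • u₂ ∈ LinearMap.range (LinearMap.id - σ.toLinearMap) := by
    have h0 : Submodule.Quotient.mk ((l : ℤ_[l]) ^ k • u₂)
        = (l : ℤ_[l]) ^ k • a := by rw [← hu₂]; rfl
    rw [← Submodule.Quotient.mk_eq_zero, h0]
    have h1 : ((l : ℤ_[l]) ^ k) • a = (l ^ k : ℕ) • a := by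
      rw [← Nat.cast_smul_eq_nsmul (R := ℤ_[l]) (l ^ k) a]
      norm_cast
    rw [h1, hk]
  obtain ⟨t, ht⟩ := htmem
  simp only [LinearMap.sub_apply, LinearMap.id_apply, LinearEquiv.coe_coe] at ht
  have hσ'tmul : ∀ x : H, σ' ((1 : ℚ_[l]) ⊗ₜ[ℤ_[l]] x) = (1 : ℚ_[l]) ⊗ₜ[ℤ_[l]] (σ x) := by
    intro x; simp [hσ']
  have hτtmul : ∀ x : H, τ ((1 : ℚ_[l]) ⊗ₜ[ℤ_[l]] x) = (1 : ℚ_[l]) ⊗ₜ[ℤ_[l]] (σ.symm x) := by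
    intro x; simp [hτ]
  -- p := v₁ - v₂ - 1 ⊗ z is fixed by σ'
  set p := v₁ - v₂ - (1 : ℚ_[l]) ⊗ₜ[ℤ_[l]] z with hp
  have hpfix : σ' p = p := by
    have e1 : p - σ' p = (v₁ - σ' v₁) - (v₂ - σ' v₂)
        - ((1:ℚ_[l]) ⊗ₜ[ℤ_[l]] z - (1:ℚ_[l]) ⊗ₜ[ℤ_[l]] (σ z)) := by
      simp only [hp, map_sub, hσ'tmul z]; abel
    rw [hv₁, hv₂] at e1
    simp only [← TensorProduct.tmul_sub] at e1
    have e2 : h₁ - h₂ - (z - σ z) = 0 := by rw [← hz]; abel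
    rw [e2, TensorProduct.tmul_zero] at e1
    exact (sub_eq_zero.mp e1).symm
  have hτp : τ p = p := by
    conv_lhs => rw [← hpfix]
    rw [hτ, hσ']
    exact aux_fix σ p
  -- Term P : B' (1 ⊗ u₂) p = 0
  have hP : B' ((1 : ℚ_[l]) ⊗ₜ[ℤ_[l]] u₂) p = 0 := by
    have h1 : B' ((1 : ℚ_[l]) ⊗ₜ[ℤ_[l]] ((l : ℤ_[l]) ^ k • u₂)) p
        = ((l : ℚ_[l]) ^ k) * B' ((1 : ℚ_[l]) ⊗ₜ[ℤ_[l]] u₂) p := by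
      rw [TensorProduct.tmul_smul, LinearMap.map_smul_of_tower, LinearMap.smul_apply,
        Algebra.smul_def, PadicInt.algebraMap_apply]
      push_cast
      ring
    have h2 : B' ((1 : ℚ_[l]) ⊗ₜ[ℤ_[l]] ((l : ℤ_[l]) ^ k • u₂)) p = 0 := by
      rw [← ht]
      have e : (1 : ℚ_[l]) ⊗ₜ[ℤ_[l]] (t - σ t)
          = (1 : ℚ_[l]) ⊗ₜ[ℤ_[l]] t - σ' ((1 : ℚ_[l]) ⊗ₜ[ℤ_[l]] t) := by
        rw [TensorProduct.tmul_sub, hσ'tmul]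
      rw [e]
      simp only [map_sub, LinearMap.sub_apply]
      rw [hB', hσ', aux_conj σ B hinv ((1 : ℚ_[l]) ⊗ₜ[ℤ_[l]] t) p, ← hτ, hτp, sub_self]
    have hlne : ((l : ℚ_[l]) ^ k) ≠ 0 := by
      have : (l : ℚ_[l]) ≠ 0 := by
        exact_mod_cast (Nat.Prime.ne_zero (Fact.out (p := l.Prime)))
      exact pow_ne_zero k this
    have h3 := h1.symm.trans h2
    exact (mul_eq_zero.mp h3).resolve_left hlne
  -- decompose v₁ and u₁
  have hv : v₁ = v₂ + (1 : ℚ_[l]) ⊗ₜ[ℤ_[l]] z + p := by rw [hp]; abel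
  have hu : (1 : ℚ_[l]) ⊗ₜ[ℤ_[l]] u₁
      = (1 : ℚ_[l]) ⊗ₜ[ℤ_[l]] u₂ + ((1 : ℚ_[l]) ⊗ₜ[ℤ_[l]] w
        - σ' ((1 : ℚ_[l]) ⊗ₜ[ℤ_[l]] w)) := by
    rw [hσ'tmul, ← TensorProduct.tmul_sub, ← TensorProduct.tmul_add, hw]
    congr 1
    abel
  -- Term C : B' ((1-σ')(1⊗w)) v₁ = - B w (σ⁻¹ h₁)
  have hτv₁ : v₁ - τ v₁ = - ((1 : ℚ_[l]) ⊗ₜ[ℤ_[l]] (σ.symm h₁)) := by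
    have h4 := congrArg τ hv₁
    rw [map_sub, hτtmul] at h4
    rw [hτ, hσ'] at h4
    rw [aux_fix σ v₁] at h4
    rw [← hτ] at h4
    rw [← h4]
    abel
  have hC : B' ((1 : ℚ_[l]) ⊗ₜ[ℤ_[l]] w - σ' ((1 : ℚ_[l]) ⊗ₜ[ℤ_[l]] w)) v₁
      = - ((B w (σ.symm h₁) : ℤ_[l]) : ℚ_[l]) := by
    rw [map_sub, LinearMap.sub_apply, hB', hσ', aux_conj σ B hinv, ← hB', ← hτ,
      ← LinearMap.map_sub, hτv₁, LinearMap.map_neg, hB', aux_tmul]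
  refine ⟨B u₂ z - B w (σ.symm h₁), ?_⟩
  rw [hu]
  simp only [map_add, LinearMap.add_apply]
  rw [hC, hv]
  simp only [map_add]
  rw [hP, hB', aux_tmul]
  push_cast
  ring
end

section
/- Let H be a free ℤ_l-module of finite rank with automorphism σ and a perfect σ-invariant symmetric bilinear form (,). The pairing (a,b)_B = (u,v) mod ℤ_l on Tors(H/(1−σ)H) (where a = u mod (1−σ)H, v ∈ H⊗ℚ_l with v−σv ∈ H representing b) is bilinear, skew-symmetric, and nondegenerate. -/
open TensorProduct

namespace Stmt7Aux

variable {l : ℕ} [Fact l.Prime] {H : Type*} [AddCommGroup H] [Module ℤ_[l] H]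

/-- inclusion of the lattice -/
noncomputable def ι : H →ₗ[ℤ_[l]] ℚ_[l] ⊗[ℤ_[l]] H := TensorProduct.mk ℤ_[l] ℚ_[l] H 1

@[simp] lemma ι_apply (x : H) : ι x = (1 : ℚ_[l]) ⊗ₜ[ℤ_[l]] x := rfl

lemma ι_inj [Module.Free ℤ_[l] H] : Function.Injective (ι (l := l) (H := H)) := by
  have h1 : Function.Injective (Algebra.linearMap ℤ_[l] ℚ_[l]) :=
    IsFractionRing.injective ℤ_[l] ℚ_[l]
  have h2 := Module.Flat.rTensor_preserves_injective_linearMap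
    (M := H) (Algebra.linearMap ℤ_[l] ℚ_[l]) h1
  intro x y hxy
  have h3 : (Algebra.linearMap ℤ_[l] ℚ_[l]).rTensor H ((1:ℤ_[l]) ⊗ₜ x)
      = (Algebra.linearMap ℤ_[l] ℚ_[l]).rTensor H ((1:ℤ_[l]) ⊗ₜ y) := by
    simpa using hxy
  simpa using congrArg (TensorProduct.lid ℤ_[l] H) (h2 h3)

/-- clearing denominators -/
lemma exists_denom (e : ℚ_[l] ⊗[ℤ_[l]] H) :
    ∃ c ∈ nonZeroDivisors ℤ_[l], ∃ z : H, c • e = ι z := by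
  induction e using TensorProduct.induction_on with
  | zero => exact ⟨1, one_mem _, 0, by simp⟩
  | tmul q h =>
      obtain ⟨c, hc⟩ := IsLocalization.exist_integer_multiples_of_finset
        (nonZeroDivisors ℤ_[l]) ({q} : Finset ℚ_[l])
      obtain ⟨a, ha⟩ := hc q (Finset.mem_singleton_self q)
      refine ⟨c, c.2, a • h, ?_⟩
      have : (c : ℤ_[l]) • (q ⊗ₜ[ℤ_[l]] h) = ((c : ℤ_[l]) • q) ⊗ₜ[ℤ_[l]] h := by
        rw [TensorProduct.smul_tmul']
      rw [this, ← ha]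
      simp only [ι_apply]
      rw [← TensorProduct.smul_tmul, Algebra.smul_def, mul_one]
  | add x y hx hy =>
      obtain ⟨c, hc, z, hz⟩ := hx
      obtain ⟨c', hc', z', hz'⟩ := hy
      refine ⟨c * c', mul_mem hc hc', c' • z + c • z', ?_⟩
      rw [smul_add, map_add, map_smul, map_smul, ← hz, ← hz']
      rw [mul_smul, mul_comm c c', mul_smul]
      rw [smul_comm c' c x, smul_comm c c' y]

end Stmt7Aux

namespace Stmt7Aux
variable {l : ℕ} [Fact l.Prime] {H : Type*} [AddCommGroup H] [Module ℤ_[l] H]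
variable (σ : H ≃ₗ[ℤ_[l]] H) (B : H →ₗ[ℤ_[l]] H →ₗ[ℤ_[l]] ℤ_[l])

/-- `1 - σ` on `H` -/
noncomputable def NH : H →ₗ[ℤ_[l]] H := LinearMap.id - σ.toLinearMap

/-- `σ` base-changed -/
noncomputable def σK : ℚ_[l] ⊗[ℤ_[l]] H →ₗ[ℚ_[l]] ℚ_[l] ⊗[ℤ_[l]] H :=
  LinearMap.baseChange ℚ_[l] σ.toLinearMap

noncomputable def σK' : ℚ_[l] ⊗[ℤ_[l]] H →ₗ[ℚ_[l]] ℚ_[l] ⊗[ℤ_[l]] H :=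
  LinearMap.baseChange ℚ_[l] σ.symm.toLinearMap

/-- `1 - σ` base-changed -/
noncomputable def NV : ℚ_[l] ⊗[ℤ_[l]] H →ₗ[ℚ_[l]] ℚ_[l] ⊗[ℤ_[l]] H :=
  LinearMap.id - σK σ

noncomputable def BK : LinearMap.BilinForm ℚ_[l] (ℚ_[l] ⊗[ℤ_[l]] H) :=
  LinearMap.BilinForm.baseChange ℚ_[l] B

@[simp] lemma σK_tmul (q : ℚ_[l]) (x : H) : σK σ (q ⊗ₜ[ℤ_[l]] x) = q ⊗ₜ[ℤ_[l]] σ x := rfl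
@[simp] lemma σK'_tmul (q : ℚ_[l]) (x : H) : σK' σ (q ⊗ₜ[ℤ_[l]] x) = q ⊗ₜ[ℤ_[l]] σ.symm x := rfl

@[simp] lemma σK'_σK (x : ℚ_[l] ⊗[ℤ_[l]] H) : σK' σ (σK σ x) = x := by
  induction x using TensorProduct.induction_on with
  | zero => simp
  | tmul q h => simp
  | add x y hx hy => simp [map_add, hx, hy]

@[simp] lemma σK_σK' (x : ℚ_[l] ⊗[ℤ_[l]] H) : σK σ (σK' σ x) = x := by
  induction x using TensorProduct.induction_on with
  | zero => simp
  | tmul q h => simp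
  | add x y hx hy => simp [map_add, hx, hy]

lemma NV_apply (x : ℚ_[l] ⊗[ℤ_[l]] H) : NV σ x = x - σK σ x := rfl

lemma NV_ι (x : H) : NV σ (ι x) = ι (NH σ x) := by
  simp [NV_apply, NH, map_sub, TensorProduct.tmul_sub]

@[simp] lemma BK_tmul (q q' : ℚ_[l]) (x y : H) :
    BK B (q ⊗ₜ[ℤ_[l]] x) (q' ⊗ₜ[ℤ_[l]] y) = B x y • (q * q') :=
  LinearMap.BilinForm.baseChange_tmul ..

lemma BK_ι (x y : H) : BK B (ι x) (ι y) = algebraMap ℤ_[l] ℚ_[l] (B x y) := by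
  simp [Algebra.smul_def]

lemma BK_symm (hsymm : ∀ x y : H, B x y = B y x) (x y : ℚ_[l] ⊗[ℤ_[l]] H) :
    BK B x y = BK B y x := by
  induction x using TensorProduct.induction_on with
  | zero => simp
  | tmul q h =>
      induction y using TensorProduct.induction_on with
      | zero => simp
      | tmul q' h' => rw [BK_tmul, BK_tmul, hsymm, mul_comm]
      | add a b ha hb => simp only [map_add, LinearMap.add_apply, ha, hb]
  | add a b ha hb => simp only [map_add, LinearMap.add_apply, ha, hb]

lemma BK_inv (hinv : ∀ x y : H, B (σ x) (σ y) = B x y) (x y : ℚ_[l] ⊗[ℤ_[l]] H) :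
    BK B (σK σ x) (σK σ y) = BK B x y := by
  induction x using TensorProduct.induction_on with
  | zero => simp
  | tmul q h =>
      induction y using TensorProduct.induction_on with
      | zero => simp
      | tmul q' h' => rw [σK_tmul, σK_tmul, BK_tmul, BK_tmul, hinv]
      | add a b ha hb => simp only [map_add, LinearMap.add_apply, ha, hb]
  | add a b ha hb => simp only [map_add, LinearMap.add_apply, ha, hb]

lemma BK_adj (hinv : ∀ x y : H, B (σ x) (σ y) = B x y) (x y : ℚ_[l] ⊗[ℤ_[l]] H) :
    BK B (σK σ x) y = BK B x (σK' σ y) := by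
  conv_lhs => rw [← σK_σK' σ y]
  rw [BK_inv σ B hinv]

end Stmt7Aux

namespace Stmt7Aux
variable {l : ℕ} [Fact l.Prime] {H : Type*} [AddCommGroup H] [Module ℤ_[l] H]
variable (σ : H ≃ₗ[ℤ_[l]] H) (B : H →ₗ[ℤ_[l]] H →ₗ[ℤ_[l]] ℤ_[l])

lemma smul_nzd_eq_zero {c : ℤ_[l]} (hc : c ∈ nonZeroDivisors ℤ_[l])
    {e : ℚ_[l] ⊗[ℤ_[l]] H} (h : c • e = 0) : e = 0 := by
  have hc0 : (algebraMap ℤ_[l] ℚ_[l]) c ≠ 0 := by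
    intro h0
    exact (nonZeroDivisors.ne_zero hc) ((IsFractionRing.injective ℤ_[l] ℚ_[l]) (by simpa using h0))
  have h2 : (algebraMap ℤ_[l] ℚ_[l] c) • e = 0 := by
    rwa [algebraMap_smul]
  calc e = (algebraMap ℤ_[l] ℚ_[l] c)⁻¹ • ((algebraMap ℤ_[l] ℚ_[l] c) • e) :=
        (inv_smul_smul₀ hc0 e).symm
    _ = 0 := by rw [h2, smul_zero]

/-- nondegeneracy of `BK` against the lattice -/
lemma BK_lattice_nondeg [Module.Free ℤ_[l] H]
    (hperf : Function.Bijective fun x : H => B x)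
    (e : ℚ_[l] ⊗[ℤ_[l]] H) (he : ∀ x : H, BK B e (ι x) = 0) : e = 0 := by
  obtain ⟨c, hc, z, hz⟩ := exists_denom e
  have hz0 : z = 0 := by
    have hB : ∀ x : H, B z x = 0 := by
      intro x
      have hz' : (algebraMap ℤ_[l] ℚ_[l] c) • e = ι z := by rw [algebraMap_smul]; exact hz
      have : BK B (ι z) (ι x) = 0 := by
        rw [← hz', map_smul, LinearMap.smul_apply, he, smul_zero]
      rw [BK_ι] at this
      exact (IsFractionRing.injective ℤ_[l] ℚ_[l]) (by simpa using this)
    have : B z = 0 := LinearMap.ext fun x => hB x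
    have h0 : (fun x : H => B x) z = (fun x : H => B x) 0 := by simp [this]
    exact hperf.injective h0
  exact smul_nzd_eq_zero hc (by rw [hz, hz0, map_zero])

/-- pairing a torsion element against a `σ`-fixed vector vanishes -/
lemma BK_fixed_zero (hinv : ∀ x y : H, B (σ x) (σ y) = B x y)
    {u : H} (w : ℚ_[l] ⊗[ℤ_[l]] H) (hw : NV σ w = ι u)
    {d : ℚ_[l] ⊗[ℤ_[l]] H} (hd : NV σ d = 0) : BK B (ι u) d = 0 := by
  have hfix : σK σ d = d := by
    have := hd
    rw [NV_apply, sub_eq_zero] at this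
    exact this.symm
  have hfix' : σK' σ d = d := by
    conv_lhs => rw [← hfix]
    rw [σK'_σK]
  rw [← hw, NV_apply, map_sub, LinearMap.sub_apply, BK_adj σ B hinv, hfix', sub_self]

end Stmt7Aux

namespace Stmt7Aux
variable {l : ℕ} [Fact l.Prime] {H : Type*} [AddCommGroup H] [Module ℤ_[l] H]
variable (σ : H ≃ₗ[ℤ_[l]] H) (B : H →ₗ[ℤ_[l]] H →ₗ[ℤ_[l]] ℤ_[l])

lemma tors_of [Module.Free ℤ_[l] H] {u : H} (v : ℚ_[l] ⊗[ℤ_[l]] H) (hv : NV σ v = ι u) :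
    (Submodule.Quotient.mk u : H ⧸ LinearMap.range (NH σ)) ∈
      Submodule.torsion ℤ_[l] (H ⧸ LinearMap.range (NH σ)) := by
  obtain ⟨c, hc, z, hz⟩ := exists_denom v
  refine ⟨⟨c, hc⟩, ?_⟩
  have h1 : ι (l := l) (c • u) = ι (NH σ z) := by
    rw [← NV_ι, ← hz, (NV σ).map_smul_of_tower c v, hv]
    exact map_smul ι c u
  have h2 : c • u = NH σ z := ι_inj h1
  have : (Submodule.Quotient.mk (c • u) : H ⧸ LinearMap.range (NH σ)) = 0 := by
    rw [h2, Submodule.Quotient.mk_eq_zero]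
    exact ⟨z, rfl⟩
  rw [← this, Submodule.Quotient.mk_smul]
  rfl

lemma of_tors {u : H}
    (h : (Submodule.Quotient.mk u : H ⧸ LinearMap.range (NH σ)) ∈
      Submodule.torsion ℤ_[l] (H ⧸ LinearMap.range (NH σ))) :
    ∃ v : ℚ_[l] ⊗[ℤ_[l]] H, NV σ v = ι u := by
  obtain ⟨⟨c, hc⟩, hcu⟩ := h
  have : (Submodule.Quotient.mk (c • u) : H ⧸ LinearMap.range (NH σ)) = 0 := by
    rw [Submodule.Quotient.mk_smul]; exact hcu
  rw [Submodule.Quotient.mk_eq_zero] at this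
  obtain ⟨z, hz⟩ := this
  have hc0 : (algebraMap ℤ_[l] ℚ_[l]) c ≠ 0 := by
    intro h0
    exact (nonZeroDivisors.ne_zero hc) ((IsFractionRing.injective ℤ_[l] ℚ_[l]) (by simpa using h0))
  refine ⟨(algebraMap ℤ_[l] ℚ_[l] c)⁻¹ • ι (l := l) z, ?_⟩
  rw [map_smul, NV_ι, hz]
  have : ι (l := l) (c • u) = (algebraMap ℤ_[l] ℚ_[l] c) • ι u := by
    rw [map_smul, algebraMap_smul]
  rw [this, smul_smul, inv_mul_cancel₀ hc0, one_smul]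

end Stmt7Aux

namespace Stmt7Aux
variable {l : ℕ} [Fact l.Prime] {H : Type*} [AddCommGroup H] [Module ℤ_[l] H]
variable (σ : H ≃ₗ[ℤ_[l]] H) (B : H →ₗ[ℤ_[l]] H →ₗ[ℤ_[l]] ℤ_[l])

/-- the subgroup `ℤ_l ⊆ ℚ_l` -/
noncomputable def ZL (l : ℕ) [Fact l.Prime] : AddSubgroup ℚ_[l] :=
  AddMonoidHom.range (algebraMap ℤ_[l] ℚ_[l]).toAddMonoidHom

lemma mem_ZL (a : ℤ_[l]) : algebraMap ℤ_[l] ℚ_[l] a ∈ ZL l := ⟨a, rfl⟩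

lemma sub_σK' (hinv : ∀ x y : H, B (σ x) (σ y) = B x y) (v : ℚ_[l] ⊗[ℤ_[l]] H) :
    v - σK' σ v = - σK' σ (NV σ v) := by
  rw [NV_apply, map_sub, σK'_σK, neg_sub]

lemma WD1 (hinv : ∀ x y : H, B (σ x) (σ y) = B x y)
    {u u' : H} (z : H) (hz : NH σ z = u' - u)
    {h' : H} (v : ℚ_[l] ⊗[ℤ_[l]] H) (hv : NV σ v = ι h') :
    BK B (ι u') v - BK B (ι u) v ∈ ZL l := by
  have e1 : BK B (ι u') v - BK B (ι u) v = BK B (ι (u' - u)) v := by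
    rw [map_sub, map_sub, LinearMap.sub_apply]
  have e2 : BK B (ι (u' - u)) v = BK B (ι z) (v - σK' σ v) := by
    rw [← hz, ← NV_ι, NV_apply, map_sub, LinearMap.sub_apply, BK_adj σ B hinv, ← map_sub]
  have e3 : v - σK' σ v = - ι (σ.symm h') := by
    rw [sub_σK' σ B hinv, hv]
    simp [ι]
  rw [e1, e2, e3, map_neg, BK_ι, ← map_neg]
  exact mem_ZL _
  
lemma WD2 (hinv : ∀ x y : H, B (σ x) (σ y) = B x y)
    {u : H} (w : ℚ_[l] ⊗[ℤ_[l]] H) (hw : NV σ w = ι u)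
    {h h' : H} (z : H) (hz : NH σ z = h' - h)
    (v v' : ℚ_[l] ⊗[ℤ_[l]] H) (hv : NV σ v = ι h) (hv' : NV σ v' = ι h') :
    BK B (ι u) v' - BK B (ι u) v ∈ ZL l := by
  set d := v' - v - ι z with hd
  have hNd : NV σ d = 0 := by
    rw [hd, map_sub, map_sub, hv, hv', NV_ι, hz, map_sub]
    abel
  have e1 : BK B (ι u) v' - BK B (ι u) v = BK B (ι u) d + BK B (ι u) (ι z) := by
    rw [hd]; rw [map_sub, map_sub]; abel
  rw [e1, BK_fixed_zero σ B hinv w hw hNd, zero_add, BK_ι]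
  exact mem_ZL _

/-- the combined well-definedness lemma -/
lemma WD [Module.Free ℤ_[l] H] (hinv : ∀ x y : H, B (σ x) (σ y) = B x y)
    {u u' h h' : H} {v v' w : ℚ_[l] ⊗[ℤ_[l]] H}
    (hw : NV σ w = ι u)
    (hu : (Submodule.Quotient.mk u' : H ⧸ LinearMap.range (NH σ)) = Submodule.Quotient.mk u)
    (hh : (Submodule.Quotient.mk h' : H ⧸ LinearMap.range (NH σ)) = Submodule.Quotient.mk h)
    (hv : NV σ v = ι h) (hv' : NV σ v' = ι h') :
    BK B (ι u') v' - BK B (ι u) v ∈ ZL l := by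
  rw [Submodule.Quotient.eq] at hu hh
  obtain ⟨z1, hz1⟩ := hu
  obtain ⟨z2, hz2⟩ := hh
  have m1 : BK B (ι u') v' - BK B (ι u) v' ∈ ZL l :=
    WD1 σ B hinv z1 hz1 v' hv'
  have m2 : BK B (ι u) v' - BK B (ι u) v ∈ ZL l :=
    WD2 σ B hinv w hw z2 hz2 v v' hv hv'
  have := add_mem m1 m2
  simpa using this

end Stmt7Aux

namespace Stmt7Aux
variable {l : ℕ} [Fact l.Prime] {H : Type*} [AddCommGroup H] [Module ℤ_[l] H]
variable (σ : H ≃ₗ[ℤ_[l]] H) (B : H →ₗ[ℤ_[l]] H →ₗ[ℤ_[l]] ℤ_[l])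

lemma skew_core (hsymm : ∀ x y : H, B x y = B y x)
    (hinv : ∀ x y : H, B (σ x) (σ y) = B x y) (wa vb : ℚ_[l] ⊗[ℤ_[l]] H) :
    BK B (NV σ wa) vb + BK B (NV σ vb) wa = BK B (NV σ wa) (NV σ vb) := by
  simp only [NV_apply, map_sub, LinearMap.sub_apply]
  rw [BK_inv σ B hinv, BK_symm B hsymm vb wa, BK_symm B hsymm (σK σ vb) wa]
  abel

/-- the submodule of `H` of elements landing in `NV(V)` -/
noncomputable def Msub : Submodule ℤ_[l] H where
  carrier := {x | ∃ v : ℚ_[l] ⊗[ℤ_[l]] H, NV σ v = ι x}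
  add_mem' := by
    rintro x y ⟨v, hv⟩ ⟨v', hv'⟩
    exact ⟨v + v', by rw [map_add, hv, hv', ← map_add]⟩
  zero_mem' := ⟨0, by simp⟩
  smul_mem' := by
    rintro c x ⟨v, hv⟩
    exact ⟨c • v, by rw [(NV σ).map_smul_of_tower, hv, map_smul]⟩

lemma NH_mem_Msub (x : H) : NH σ x ∈ Msub σ := ⟨ι x, NV_ι σ x⟩

lemma smul_mem_Msub {c : ℤ_[l]} (hc : c ≠ 0) {x : H} (h : c • x ∈ Msub σ) : x ∈ Msub σ := by
  obtain ⟨v, hv⟩ := h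
  have hc0 : (algebraMap ℤ_[l] ℚ_[l]) c ≠ 0 := fun h0 =>
    hc ((IsFractionRing.injective ℤ_[l] ℚ_[l]) (by simpa using h0))
  refine ⟨(algebraMap ℤ_[l] ℚ_[l] c)⁻¹ • v, ?_⟩
  rw [map_smul, hv]
  have : ι (l := l) (c • x) = (algebraMap ℤ_[l] ℚ_[l] c) • ι x := by
    rw [map_smul, algebraMap_smul]
  rw [this, smul_smul, inv_mul_cancel₀ hc0, one_smul]

lemma quot_Msub_tf : NoZeroSMulDivisors ℤ_[l] (H ⧸ Msub σ) := by
  refine ⟨fun {c x} h => ?_⟩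
  by_cases hc : c = 0
  · exact Or.inl hc
  · refine Or.inr ?_
    obtain ⟨y, rfl⟩ := Submodule.mkQ_surjective (Msub σ) x
    have : (Msub σ).mkQ (c • y) = 0 := by rw [map_smul]; exact h
    rw [Submodule.mkQ_apply, Submodule.Quotient.mk_eq_zero] at this
    have := smul_mem_Msub σ hc this
    rw [Submodule.mkQ_apply, Submodule.Quotient.mk_eq_zero]
    exact this

end Stmt7Aux

namespace Stmt7Aux
variable {l : ℕ} [Fact l.Prime] {H : Type*} [AddCommGroup H] [Module ℤ_[l] H]
variable (σ : H ≃ₗ[ℤ_[l]] H) (B : H →ₗ[ℤ_[l]] H →ₗ[ℤ_[l]] ℤ_[l])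

/-- a retraction of `H` onto `Msub` -/
lemma exists_retraction [Module.Finite ℤ_[l] H] :
    ∃ r : H →ₗ[ℤ_[l]] ↥(Msub σ), ∀ m : H, (hm : m ∈ Msub σ) → r m = ⟨m, hm⟩ := by
  haveI : Module.Finite ℤ_[l] (H ⧸ Msub σ) := Module.Finite.quotient _ _
  haveI : NoZeroSMulDivisors ℤ_[l] (H ⧸ Msub σ) := quot_Msub_tf σ
  haveI : Module.Free ℤ_[l] (H ⧸ Msub σ) := Module.free_of_finite_type_torsion_free'
  obtain ⟨s, hs⟩ := Module.projective_lifting_property (Msub σ).mkQ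
    (LinearMap.id (M := H ⧸ Msub σ)) (Submodule.mkQ_surjective _)
  have hmem : ∀ x : H, x - s ((Msub σ).mkQ x) ∈ Msub σ := by
    intro x
    rw [← Submodule.Quotient.mk_eq_zero (p := Msub σ), ← Submodule.mkQ_apply, map_sub]
    have : (Msub σ).mkQ (s ((Msub σ).mkQ x)) = (Msub σ).mkQ x := by
      have := congrArg (fun f => f ((Msub σ).mkQ x)) hs
      simpa using this
    rw [this, sub_self]
  refine ⟨(LinearMap.id - s ∘ₗ (Msub σ).mkQ).codRestrict (Msub σ) hmem, ?_⟩
  intro m hm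
  apply Subtype.ext
  have hm0 : (Msub σ).mkQ m = 0 := by
    rw [Submodule.mkQ_apply, Submodule.Quotient.mk_eq_zero]; exact hm
  rw [Submodule.mkQ_apply] at hm0
  simp [LinearMap.codRestrict, hm0]

/-- the heart of nondegeneracy -/
lemma nondeg_core [Module.Free ℤ_[l] H] [Module.Finite ℤ_[l] H]
    (hsymm : ∀ x y : H, B x y = B y x)
    (hinv : ∀ x y : H, B (σ x) (σ y) = B x y)
    (hperf : Function.Bijective fun x : H => B x)
    {u : H} (wa : ℚ_[l] ⊗[ℤ_[l]] H) (hwa : NV σ wa = ι u)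
    (hint : ∀ (x : H) (v : ℚ_[l] ⊗[ℤ_[l]] H), NV σ v = ι x → BK B (ι u) v ∈ ZL l) :
    u ∈ LinearMap.range (NH σ) := by
  classical
  -- the functional `g0 = BK (σK wa) (ι ·)`
  set g0 : H →ₗ[ℤ_[l]] ℚ_[l] :=
    (LinearMap.restrictScalars ℤ_[l] (BK B (σK σ wa))) ∘ₗ ι with hg0
  have key : ∀ x ∈ Msub σ, g0 x ∈ ZL l := by
    rintro x ⟨v, hv⟩
    have e1 : BK B (ι u) v = - BK B wa (ι (σ.symm x)) := by
      rw [← hwa, NV_apply, map_sub, LinearMap.sub_apply, BK_adj σ B hinv, ← map_sub,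
        sub_σK' σ B hinv, hv, map_neg]
      simp only [ι_apply, σK'_tmul]
    have e2 : g0 x = BK B wa (ι (σ.symm x)) := by
      rw [hg0]
      simp only [LinearMap.comp_apply, LinearMap.restrictScalars_apply]
      rw [BK_adj σ B hinv]
      simp only [ι_apply, σK'_tmul]
    rw [e2]
    have := hint x v hv
    rw [e1] at this
    simpa using neg_mem this
  -- build `f : Msub →ₗ ℤ_[l]` with `algebraMap ∘ f = g0` on `Msub`
  set A : ℤ_[l] →ₗ[ℤ_[l]] ℚ_[l] := Algebra.linearMap ℤ_[l] ℚ_[l] with hA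
  have hAinj : Function.Injective A := IsFractionRing.injective ℤ_[l] ℚ_[l]
  have hmemA : ∀ m : ↥(Msub σ), g0 m.1 ∈ LinearMap.range A := by
    intro m
    obtain ⟨a, ha⟩ := key m.1 m.2
    exact ⟨a, ha⟩
  set eA := LinearEquiv.ofInjective A hAinj with heA
  set f : ↥(Msub σ) →ₗ[ℤ_[l]] ℤ_[l] :=
    eA.symm ∘ₗ ((g0 ∘ₗ (Msub σ).subtype).codRestrict (LinearMap.range A) fun m => hmemA m)
    with hf
  have hfA : ∀ m : ↥(Msub σ), algebraMap ℤ_[l] ℚ_[l] (f m) = g0 m.1 := by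
    intro m
    set X := ((g0 ∘ₗ (Msub σ).subtype).codRestrict (LinearMap.range A) fun m => hmemA m) m with hX
    have h0 : f m = eA.symm X := by rw [hf]; rfl
    have h1 : (↑(eA (eA.symm X)) : ℚ_[l]) = A (eA.symm X) := rfl
    have h2 : A (f m) = g0 m.1 := by
      rw [h0, ← h1, eA.apply_symm_apply]
      rfl
    exact h2
  -- extend to `H` via a retraction
  obtain ⟨r, hr⟩ := exists_retraction σ
  set f' : H →ₗ[ℤ_[l]] ℤ_[l] := f ∘ₗ r with hf'
  obtain ⟨z, hz⟩ := hperf.surjective f'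
  set d : ℚ_[l] ⊗[ℤ_[l]] H := σK σ wa - ι z with hd
  have claim1 : ∀ x ∈ Msub σ, BK B d (ι x) = 0 := by
    intro x hx
    rw [hd, map_sub, LinearMap.sub_apply, BK_ι]
    have h1 : B z x = f' x := by rw [← hz]
    have h2 : f' x = f ⟨x, hx⟩ := by rw [hf']; simp [hr x hx]
    rw [h1, h2, hfA ⟨x, hx⟩]
    have : BK B (σK σ wa) (ι x) = g0 x := by rw [hg0]; rfl
    rw [this, sub_self]
  have claim2 : ∀ x : H, BK B (d - σK' σ d) (ι x) = 0 := by
    intro x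
    rw [map_sub, LinearMap.sub_apply]
    have hadj : BK B (σK' σ d) (ι x) = BK B d (σK σ (ι x)) := by
      conv_rhs => rw [← σK_σK' σ d]
      rw [BK_adj σ B hinv, σK'_σK]
    rw [hadj, ← LinearMap.map_sub]
    have : ι x - σK σ (ι x) = ι (NH σ x) := by rw [← NV_apply, NV_ι]
    rw [this]
    exact claim1 _ (NH_mem_Msub σ x)
  have hde : d - σK' σ d = 0 := BK_lattice_nondeg B hperf _ claim2
  have hfix : σK σ d = d := by
    have h1 : σK' σ d = d := by rw [sub_eq_zero] at hde; exact hde.symm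
    conv_lhs => rw [← h1, σK_σK']
  have hNVd : NV σ d = 0 := by rw [NV_apply, hfix, sub_self]
  have main : ι (l := l) (σ u) = ι (NH σ z) := by
    have e1 : NV σ (σK σ wa) = ι (σ u) := by
      have : NV σ (σK σ wa) = σK σ (NV σ wa) := by
        simp only [NV_apply, map_sub]
      rw [this, hwa]
      simp [ι]
    have e2 : NV σ (σK σ wa) = ι (NH σ z) := by
      have : σK σ wa = ι z + d := by rw [hd]; abel
      rw [this, map_add, hNVd, add_zero, NV_ι]
    rw [← e1, e2]
  have : σ u = NH σ z := ι_inj main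
  refine ⟨σ.symm z, ?_⟩
  have : u = σ.symm (NH σ z) := by
    rw [← this]; simp
  rw [this]
  show NH σ (σ.symm z) = σ.symm (NH σ z)
  simp only [NH, LinearMap.sub_apply, LinearMap.id_apply, LinearEquiv.coe_coe, map_sub]
  simp

end Stmt7Aux

namespace Stmt7Aux
variable {l : ℕ} [Fact l.Prime] {H : Type*} [AddCommGroup H] [Module ℤ_[l] H]
variable (σ : H ≃ₗ[ℤ_[l]] H) (B : H →ₗ[ℤ_[l]] H →ₗ[ℤ_[l]] ℤ_[l])

lemma exists_rep (a : ↥(Submodule.torsion ℤ_[l] (H ⧸ LinearMap.range (NH σ)))) :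
    ∃ u : H, (Submodule.Quotient.mk u : H ⧸ LinearMap.range (NH σ)) = a.1 ∧
      ∃ w : ℚ_[l] ⊗[ℤ_[l]] H, NV σ w = ι u := by
  obtain ⟨u, hu⟩ := Submodule.Quotient.mk_surjective _ a.1
  refine ⟨u, hu, of_tors σ ?_⟩
  rw [hu]; exact a.2

noncomputable def rep (a : ↥(Submodule.torsion ℤ_[l] (H ⧸ LinearMap.range (NH σ)))) : H :=
  (exists_rep σ a).choose

noncomputable def wrep (a : ↥(Submodule.torsion ℤ_[l] (H ⧸ LinearMap.range (NH σ)))) :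
    ℚ_[l] ⊗[ℤ_[l]] H :=
  (exists_rep σ a).choose_spec.2.choose

lemma rep_spec (a : ↥(Submodule.torsion ℤ_[l] (H ⧸ LinearMap.range (NH σ)))) :
    (Submodule.Quotient.mk (rep σ a) : H ⧸ LinearMap.range (NH σ)) = a.1 :=
  (exists_rep σ a).choose_spec.1

lemma wrep_spec (a : ↥(Submodule.torsion ℤ_[l] (H ⧸ LinearMap.range (NH σ)))) :
    NV σ (wrep σ a) = ι (rep σ a) :=
  (exists_rep σ a).choose_spec.2.choose_spec

noncomputable def P0 (a b : ↥(Submodule.torsion ℤ_[l] (H ⧸ LinearMap.range (NH σ)))) :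
    ℚ_[l] ⧸ ZL l :=
  QuotientAddGroup.mk (BK B (ι (rep σ a)) (wrep σ b))

lemma P0_spec [Module.Free ℤ_[l] H] (hinv : ∀ x y : H, B (σ x) (σ y) = B x y)
    (a b : ↥(Submodule.torsion ℤ_[l] (H ⧸ LinearMap.range (NH σ))))
    {u h : H} {v : ℚ_[l] ⊗[ℤ_[l]] H}
    (hu : (Submodule.Quotient.mk u : H ⧸ LinearMap.range (NH σ)) = a.1)
    (hv : NV σ v = ι h)
    (hh : (Submodule.Quotient.mk h : H ⧸ LinearMap.range (NH σ)) = b.1) :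
    P0 σ B a b = QuotientAddGroup.mk (BK B (ι u) v) := by
  have hW := WD σ B hinv (wrep_spec σ a) (hu.trans (rep_spec σ a).symm)
    (hh.trans (rep_spec σ b).symm) (wrep_spec σ b) hv
  refine (QuotientAddGroup.eq).mpr ?_
  rw [neg_add_eq_sub]
  exact hW

variable [Module.Free ℤ_[l] H]

lemma P0_add_right (hinv : ∀ x y : H, B (σ x) (σ y) = B x y)
    (a b b' : ↥(Submodule.torsion ℤ_[l] (H ⧸ LinearMap.range (NH σ)))) :
    P0 σ B a (b + b') = P0 σ B a b + P0 σ B a b' := by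
  have h1 : P0 σ B a (b + b')
      = QuotientAddGroup.mk (BK B (ι (rep σ a)) (wrep σ b + wrep σ b')) := by
    refine P0_spec σ B hinv a (b + b') (h := rep σ b + rep σ b') (rep_spec σ a) ?_ ?_
    · rw [map_add, wrep_spec, wrep_spec, ← map_add]
    · rw [Submodule.Quotient.mk_add, rep_spec, rep_spec]; rfl
  rw [h1, map_add]
  rfl

lemma P0_zero_right (hinv : ∀ x y : H, B (σ x) (σ y) = B x y)
    (a : ↥(Submodule.torsion ℤ_[l] (H ⧸ LinearMap.range (NH σ)))) :
    P0 σ B a 0 = 0 := by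
  have h1 : P0 σ B a 0 = QuotientAddGroup.mk (BK B (ι (rep σ a)) 0) := by
    refine P0_spec σ B hinv a 0 (rep_spec σ a) (h := 0) ?_ ?_
    · rw [map_zero, map_zero]
    · simp
  rw [h1, map_zero]
  rfl

lemma P0_add_left (hinv : ∀ x y : H, B (σ x) (σ y) = B x y)
    (a a' b : ↥(Submodule.torsion ℤ_[l] (H ⧸ LinearMap.range (NH σ)))) :
    P0 σ B (a + a') b = P0 σ B a b + P0 σ B a' b := by
  have h1 : P0 σ B (a + a') b
      = QuotientAddGroup.mk (BK B (ι (rep σ a + rep σ a')) (wrep σ b)) := by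
    refine P0_spec σ B hinv (a + a') b ?_ (wrep_spec σ b) (rep_spec σ b)
    rw [Submodule.Quotient.mk_add, rep_spec, rep_spec]; rfl
  rw [h1, map_add, map_add, LinearMap.add_apply]
  rfl

lemma P0_zero_left (hinv : ∀ x y : H, B (σ x) (σ y) = B x y)
    (b : ↥(Submodule.torsion ℤ_[l] (H ⧸ LinearMap.range (NH σ)))) :
    P0 σ B 0 b = 0 := by
  have h1 : P0 σ B 0 b = QuotientAddGroup.mk (BK B (ι (0 : H)) (wrep σ b)) := by
    refine P0_spec σ B hinv 0 b ?_ (wrep_spec σ b) (rep_spec σ b)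
    simp
  rw [h1, map_zero, map_zero]
  rfl

lemma P0_skew (hsymm : ∀ x y : H, B x y = B y x)
    (hinv : ∀ x y : H, B (σ x) (σ y) = B x y)
    (a b : ↥(Submodule.torsion ℤ_[l] (H ⧸ LinearMap.range (NH σ)))) :
    P0 σ B b a = - P0 σ B a b := by
  have h1 : P0 σ B b a = QuotientAddGroup.mk (BK B (ι (rep σ b)) (wrep σ a)) :=
    P0_spec σ B hinv b a (rep_spec σ b) (wrep_spec σ a) (rep_spec σ a)
  have hsum : BK B (ι (rep σ b)) (wrep σ a) + BK B (ι (rep σ a)) (wrep σ b)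
      = BK B (ι (rep σ b)) (ι (rep σ a)) := by
    rw [← wrep_spec σ a, ← wrep_spec σ b]
    exact skew_core σ B hsymm hinv (wrep σ b) (wrep σ a)
  have hz : P0 σ B b a + P0 σ B a b = 0 := by
    rw [h1]
    show QuotientAddGroup.mk _ + QuotientAddGroup.mk _ = (0 : ℚ_[l] ⧸ ZL l)
    rw [← QuotientAddGroup.mk_add, hsum, BK_ι]
    exact (QuotientAddGroup.eq_zero_iff _).mpr (mem_ZL _)
  exact eq_neg_of_add_eq_zero_left hz

end Stmt7Aux

namespace Stmt7Aux
variable {l : ℕ} [Fact l.Prime] {H : Type*} [AddCommGroup H] [Module ℤ_[l] H]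
variable (σ : H ≃ₗ[ℤ_[l]] H) (B : H →ₗ[ℤ_[l]] H →ₗ[ℤ_[l]] ℤ_[l])
variable [Module.Free ℤ_[l] H] [Module.Finite ℤ_[l] H]

lemma P0_nondeg (hsymm : ∀ x y : H, B x y = B y x)
    (hinv : ∀ x y : H, B (σ x) (σ y) = B x y)
    (hperf : Function.Bijective fun x : H => B x)
    (a : ↥(Submodule.torsion ℤ_[l] (H ⧸ LinearMap.range (NH σ))))
    (h0 : ∀ b, P0 σ B a b = 0) : a = 0 := by
  have hint : ∀ (x : H) (v : ℚ_[l] ⊗[ℤ_[l]] H), NV σ v = ι x → BK B (ι (rep σ a)) v ∈ ZL l := by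
    intro x v hv
    set b : ↥(Submodule.torsion ℤ_[l] (H ⧸ LinearMap.range (NH σ))) :=
      ⟨Submodule.Quotient.mk x, tors_of σ v hv⟩ with hb
    have hspec : P0 σ B a b = QuotientAddGroup.mk (BK B (ι (rep σ a)) v) :=
      P0_spec σ B hinv a b (rep_spec σ a) hv rfl
    rw [h0 b] at hspec
    exact (QuotientAddGroup.eq_zero_iff _).mp hspec.symm
  have hmem := nondeg_core σ B hsymm hinv hperf (wrep σ a) (wrep_spec σ a) hint
  apply Subtype.ext
  show a.1 = 0
  rw [← rep_spec σ a, Submodule.Quotient.mk_eq_zero]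
  exact hmem

noncomputable def P (hinv : ∀ x y : H, B (σ x) (σ y) = B x y) :
    ↥(Submodule.torsion ℤ_[l] (H ⧸ LinearMap.range (NH σ))) →+
      ↥(Submodule.torsion ℤ_[l] (H ⧸ LinearMap.range (NH σ))) →+ ℚ_[l] ⧸ ZL l where
  toFun a :=
    { toFun := P0 σ B a
      map_zero' := P0_zero_right σ B hinv a
      map_add' := fun b b' => P0_add_right σ B hinv a b b' }
  map_zero' := AddMonoidHom.ext fun b => P0_zero_left σ B hinv b
  map_add' a a' := AddMonoidHom.ext fun b => P0_add_left σ B hinv a a' b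

lemma P_apply (hinv : ∀ x y : H, B (σ x) (σ y) = B x y) (a b) :
    P σ B hinv a b = P0 σ B a b := rfl

end Stmt7Aux


theorem stmt7 (l : ℕ) [Fact l.Prime]
    (H : Type*) [AddCommGroup H] [Module ℤ_[l] H]
    [Module.Free ℤ_[l] H] [Module.Finite ℤ_[l] H]
    (σ : H ≃ₗ[ℤ_[l]] H)
    (B : H →ₗ[ℤ_[l]] H →ₗ[ℤ_[l]] ℤ_[l])
    (hsymm : ∀ x y : H, B x y = B y x)
    (hinv : ∀ x y : H, B (σ x) (σ y) = B x y)
    (hperf : Function.Bijective fun x : H => B x) :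
    ∃ P : ↥(Submodule.torsion ℤ_[l]
          (H ⧸ LinearMap.range (LinearMap.id - σ.toLinearMap))) →+
        ↥(Submodule.torsion ℤ_[l]
          (H ⧸ LinearMap.range (LinearMap.id - σ.toLinearMap))) →+
        (ℚ_[l] ⧸ AddMonoidHom.range (algebraMap ℤ_[l] ℚ_[l]).toAddMonoidHom),
      -- `P` is computed via representatives:  `(a,b)_B = (u,v) mod ℤ_l`
      (∀ a b (u : H) (v : ℚ_[l] ⊗[ℤ_[l]] H) (h : H),
          Submodule.Quotient.mk u = a.1 →
          v - LinearMap.baseChange ℚ_[l] σ.toLinearMap v = (1 : ℚ_[l]) ⊗ₜ[ℤ_[l]] h →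
          Submodule.Quotient.mk h = b.1 →
          P a b = QuotientAddGroup.mk
            (LinearMap.BilinForm.baseChange ℚ_[l] B ((1 : ℚ_[l]) ⊗ₜ[ℤ_[l]] u) v)) ∧
      -- skew-symmetric
      (∀ a b, P b a = - P a b) ∧
      -- nondegenerate
      (∀ a, (∀ b, P a b = 0) → a = 0) := by
  refine ⟨Stmt7Aux.P σ B hinv, ?_, ?_, ?_⟩
  · intro a b u v h hu hv hh
    exact Stmt7Aux.P0_spec σ B hinv a b hu (show Stmt7Aux.NV σ v = Stmt7Aux.ι h from hv) hh
  · intro a b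
    exact Stmt7Aux.P0_skew σ B hsymm hinv a b
  · intro a ha
    exact Stmt7Aux.P0_nondeg σ B hsymm hinv hperf a (fun b => ha b)
end

section
/- Let l be an odd prime, H a free ℤ_l-module of finite rank with automorphism σ and a perfect σ-invariant symmetric bilinear form. Then the order of the torsion subgroup of H/(1−σ)H is a perfect square. -/
universe u

lemma zmod_div (l m k : ℕ) (hl : l.Prime) (hkm : k ≤ m) (c : ZMod (l^m))
    (h : (l : ZMod (l^m))^k * c = 0) : ∃ d : ZMod (l^m), c = (l:ZMod (l^m))^(m-k) * d := by
  have hNe : NeZero (l^m) := ⟨pow_ne_zero _ hl.pos.ne'⟩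
  have hc : ((c.val : ℕ) : ZMod (l^m)) = c := ZMod.natCast_rightInverse c
  have h2 : ((l^k * c.val : ℕ) : ZMod (l^m)) = 0 := by push_cast; rw [hc]; exact h
  have h3 : l^m ∣ l^k * c.val := (ZMod.natCast_eq_zero_iff _ _).mp h2
  have h4 : l^(m-k) ∣ c.val := by
    have heq : l ^ k * l ^ (m-k) = l ^ m := by rw [← pow_add]; congr 1; omega
    exact (mul_dvd_mul_iff_left (pow_ne_zero k hl.pos.ne')).mp (dvd_trans (dvd_of_eq heq) h3)
  rcases h4 with ⟨e, he⟩
  refine ⟨(e : ZMod (l^m)), ?_⟩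
  rw [← hc, he]; push_cast; ring

lemma zmod_unit (l m k : ℕ) (hl : l.Prime) (hkm : k ≤ m) (hk : 1 ≤ k) (c : ZMod (l^m))
    (h : (l : ZMod (l^m))^k * c = 0) (h' : (l : ZMod (l^m))^(k-1) * c ≠ 0) :
    ∃ d : ZMod (l^m), IsUnit d ∧ c = (l:ZMod (l^m))^(m-k) * d := by
  obtain ⟨d, hd⟩ := zmod_div l m k hl hkm c h
  have hNe : NeZero (l^m) := ⟨pow_ne_zero _ hl.pos.ne'⟩
  refine ⟨d, ?_, hd⟩
  by_contra hu
  have hdc : ((d.val : ℕ) : ZMod (l^m)) = d := ZMod.natCast_rightInverse d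
  have hld : l ∣ d.val := by
    rw [← hdc, ZMod.isUnit_iff_coprime] at hu
    by_contra hnd
    exact hu ((Nat.Coprime.pow_left m (hl.coprime_iff_not_dvd.mpr hnd)).symm)
  apply h'
  rcases hld with ⟨e, he⟩
  rw [hd, ← hdc, he]
  push_cast
  have hm' : (k-1)+(m-k)+1 = m := by omega
  calc (l:ZMod (l^m))^(k-1) * ((l:ZMod (l^m))^(m-k) * ((l:ZMod (l^m)) * e))
      = (l:ZMod (l^m))^((k-1)+(m-k)+1) * e := by rw [pow_add, pow_add, pow_one]; ring
    _ = (l:ZMod (l^m))^m * e := by rw [hm']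
    _ = 0 := by
        have h0 := ZMod.natCast_self (l^m)
        push_cast at h0
        rw [h0, zero_mul]

/-- Cancellation of `ε = l^(m-k)` : if `a*ε = b*ε` in `ZMod (l^m)` then `a ≡ b` mod `l^k`. -/
lemma zmod_cancel_eps (l m k : ℕ) (hl : l.Prime) (hkm : k ≤ m) (a b : ℕ)
    (h : (a : ZMod (l^m)) * (l:ZMod (l^m))^(m-k) = (b : ZMod (l^m)) * (l:ZMod (l^m))^(m-k)) :
    (a : ZMod (l^k)) = (b : ZMod (l^k)) := by
  have h2 : ((a * l^(m-k) : ℤ) : ZMod (l^m)) = ((b * l^(m-k) : ℤ) : ZMod (l^m)) := by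
    push_cast; exact h
  rw [ZMod.intCast_eq_intCast_iff] at h2
  have h3 : ((l:ℤ)^m) ∣ (b * l^(m-k) - a * l^(m-k)) := by
    have := Int.ModEq.dvd h2
    push_cast at this ⊢
    exact this
  have h4 : ((l:ℤ)^k) ∣ (b - a) := by
    have heq : (l:ℤ) ^ k * l ^ (m-k) = l ^ m := by rw [← pow_add]; congr 1; omega
    have h5 : (l:ℤ)^k * l^(m-k) ∣ (b - a) * l^(m-k) := by
      rw [heq]; convert h3 using 1; ring
    have hne : (l:ℤ)^(m-k) ≠ 0 := pow_ne_zero _ (by exact_mod_cast hl.pos.ne')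
    rcases h5 with ⟨q, hq⟩
    exact ⟨q, by
      have : (b - a) * l^(m-k) = (l^k * q) * l^(m-k) := by rw [hq]; ring
      exact mul_right_cancel₀ hne this⟩
  have : ((a : ℤ) : ZMod (l^k)) = ((b : ℤ) : ZMod (l^k)) := by
    rw [ZMod.intCast_eq_intCast_iff]
    have := Int.modEq_iff_dvd.mpr (by push_cast; exact h4)
    exact_mod_cast this
  exact_mod_cast this

lemma square_card_aux (l : ℕ) (hl : l.Prime) (hodd : l ≠ 2) (m : ℕ) :
    ∀ (n : ℕ) (T : Type u) (_ : AddCommGroup T) (_ : Finite T)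
      (lam : T → T → ZMod (l ^ m)),
      (∀ a b c, lam (a + b) c = lam a c + lam b c) →
      (∀ a b c, lam a (b + c) = lam a b + lam a c) →
      (∀ a b, lam b a = - lam a b) →
      (∀ t, (∀ t', lam t t' = 0) → t = 0) →
      (∀ t : T, l ^ m • t = 0) →
      Nat.card T = n →
      IsSquare n := by
  intro n
  induction n using Nat.strong_induction_on with
  | _ n ih =>
  intro T _inst1 _inst2 lam hL hR hskew hnd hexp hcard
  -- trivial case
  by_cases htriv : ∀ t : T, t = 0
  · haveI : Subsingleton T := ⟨fun a b => (htriv a).trans (htriv b).symm⟩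
    haveI : Unique T := ⟨⟨0⟩, fun a => htriv a⟩
    rw [← hcard, Nat.card_unique]
    exact IsSquare.one
  push_neg at htriv
  obtain ⟨t₀, ht₀⟩ := htriv
  -- basic additive lemmas for lam
  have hL0 : ∀ c, lam 0 c = 0 := by
    intro c
    have := hL 0 0 c
    rw [add_zero] at this
    exact left_eq_add.mp this
  have hR0 : ∀ c, lam c 0 = 0 := by
    intro c
    have := hR c 0 0
    rw [add_zero] at this
    exact left_eq_add.mp this
  have hLn : ∀ (j : ℕ) (a c : T), lam (j • a) c = j • lam a c := by
    intro j a c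
    induction j with
    | zero => simpa using hL0 c
    | succ j ihj => rw [succ_nsmul, succ_nsmul, hL, ihj]
  have hRn : ∀ (j : ℕ) (a c : T), lam a (j • c) = j • lam a c := by
    intro j a c
    induction j with
    | zero => simpa using hR0 a
    | succ j ihj => rw [succ_nsmul, succ_nsmul, hR, ihj]
  -- the exponent k
  have hPm : ∃ j : ℕ, ∀ t : T, l ^ j • t = 0 := ⟨m, hexp⟩
  classical
  set k := Nat.find hPm with hk_def
  have hPk : ∀ t : T, l ^ k • t = 0 := Nat.find_spec hPm
  have hkm : k ≤ m := Nat.find_le hexp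
  have hk1 : 1 ≤ k := by
    rcases Nat.eq_zero_or_pos k with h0 | h
    · exfalso
      apply ht₀
      have := hPk t₀
      rwa [h0, pow_zero, one_smul] at this
    · exact h
  have hmax : ¬ ∀ t : T, l ^ (k - 1) • t = 0 := Nat.find_min hPm (by omega)
  push_neg at hmax
  obtain ⟨x, hx⟩ := hmax
  -- ZMod (l^m)-module structure
  letI : Module (ZMod (l ^ m)) T := AddCommGroup.zmodModule hexp
  have hNe : NeZero (l^m) := ⟨pow_ne_zero _ hl.pos.ne'⟩
  have hzsmul : ∀ (a : ZMod (l^m)) (t : T), a • t = a.val • t := by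
    intro a t
    conv_lhs => rw [← ZMod.natCast_rightInverse a]
    exact Nat.cast_smul_eq_nsmul _ _ _
  have hRz : ∀ (a : ZMod (l^m)) (s t : T), lam s (a • t) = a * lam s t := by
    intro a s t
    rw [hzsmul, hRn, nsmul_eq_mul, ZMod.natCast_rightInverse a]
  have hLz : ∀ (a : ZMod (l^m)) (s t : T), lam (a • s) t = a * lam s t := by
    intro a s t
    rw [hzsmul, hLn, nsmul_eq_mul, ZMod.natCast_rightInverse a]
  -- alternating
  have h2unit : IsUnit (2 : ZMod (l^m)) := by
    have : ((2:ℕ) : ZMod (l^m)) = (2 : ZMod (l^m)) := by norm_cast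
    rw [← this, ZMod.isUnit_iff_coprime]
    rw [Nat.prime_two.coprime_iff_not_dvd]
    intro hdvd
    exact hodd ((Nat.prime_dvd_prime_iff_eq Nat.prime_two hl).mp
      (Nat.prime_two.dvd_of_dvd_pow hdvd)).symm
  have halt : ∀ t : T, lam t t = 0 := by
    intro t
    have h1 : lam t t = - lam t t := hskew t t
    have h2 : (2 : ZMod (l^m)) * lam t t = 0 := by
      rw [two_mul]
      nth_rewrite 2 [h1]
      rw [add_neg_cancel]
    exact (h2unit.mul_right_eq_zero).mp h2
  have hRneg : ∀ s t : T, lam s (-t) = - lam s t := by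
    intro s t
    have h0 : lam s (t + -t) = 0 := by rw [add_neg_cancel, hR0]
    rw [hR] at h0
    exact eq_neg_of_add_eq_zero_right h0
  have hLneg : ∀ s t : T, lam (-s) t = - lam s t := by
    intro s t
    have h0 : lam (s + -s) t = 0 := by rw [add_neg_cancel, hL0]
    rw [hL] at h0
    exact eq_neg_of_add_eq_zero_right h0
  -- ε and y
  set ε : ZMod (l^m) := (l:ZMod (l^m))^(m-k) with hε
  have hxk : ∀ t, (l:ZMod (l^m))^k * lam x t = 0 := by
    intro t
    have h0 : lam (l^k • x) t = 0 := by rw [hPk, hL0]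
    rw [hLn, nsmul_eq_mul] at h0
    push_cast at h0
    exact h0
  have hx' : ∃ y₀, lam (l^(k-1) • x) y₀ ≠ 0 := by
    by_contra hc
    push_neg at hc
    exact hx (hnd _ hc)
  obtain ⟨y₀, hy₀⟩ := hx'
  have hy₀' : (l:ZMod (l^m))^(k-1) * lam x y₀ ≠ 0 := by
    rw [hLn, nsmul_eq_mul] at hy₀
    push_cast at hy₀
    exact hy₀
  obtain ⟨d, hdu, hd⟩ := zmod_unit l m k hl hkm hk1 (lam x y₀) (hxk y₀) hy₀'
  have hy_ex : ∃ y : T, lam x y = ε := by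
    refine ⟨((hdu.unit⁻¹ : (ZMod (l^m))ˣ) : ZMod (l^m)) • y₀, ?_⟩
    rw [hRz, hd]
    have h1 : ((hdu.unit⁻¹ : (ZMod (l^m))ˣ) : ZMod (l^m)) * ((l:ZMod (l^m))^(m-k) * d)
        = (l:ZMod (l^m))^(m-k) * (((hdu.unit⁻¹ : (ZMod (l^m))ˣ) : ZMod (l^m)) * d) := by ring
    rw [h1, hdu.val_inv_mul, mul_one]
  obtain ⟨y, hxy⟩ := hy_ex
  have hyx : lam y x = -ε := by rw [hskew, hxy]
  have hyk : ∀ t, (l:ZMod (l^m))^k * lam y t = 0 := by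
    intro t
    have h0 : lam (l^k • y) t = 0 := by rw [hPk, hL0]
    rw [hLn, nsmul_eq_mul] at h0
    push_cast at h0
    exact h0
  -- the subgroup W
  set W : AddSubgroup T :=
    { carrier := {t | lam x t = 0 ∧ lam y t = 0}
      zero_mem' := ⟨hR0 x, hR0 y⟩
      add_mem' := fun ha hb => ⟨by rw [hR, ha.1, hb.1, add_zero], by rw [hR, ha.2, hb.2, add_zero]⟩
      neg_mem' := fun ha => ⟨by rw [hRneg, ha.1, neg_zero], by rw [hRneg, ha.2, neg_zero]⟩ } with hW_def
  have hWmem : ∀ t : T, t ∈ W ↔ lam x t = 0 ∧ lam y t = 0 := fun t => Iff.rfl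
  -- decomposition
  have hdecomp : ∀ t : T, ∃ (a b : ZMod (l^m)) (w : T), w ∈ W ∧ t = a • x + b • y + w := by
    intro t
    obtain ⟨c₂, hc₂⟩ := zmod_div l m k hl hkm (lam x t) (hxk t)
    obtain ⟨c₁, hc₁⟩ := zmod_div l m k hl hkm (lam y t) (hyk t)
    rw [← hε] at hc₂ hc₁
    refine ⟨-c₁, c₂, t - c₂ • y + c₁ • x, ⟨?_, ?_⟩, ?_⟩
    · rw [hR, sub_eq_add_neg, hR, hRneg, hRz, hRz, hc₂, hxy, halt, mul_zero, add_zero]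
      ring
    · rw [hR, sub_eq_add_neg, hR, hRneg, hRz, hRz, hc₁, halt, hyx, mul_zero]
      ring
    · rw [neg_smul]
      abel
  -- smul mod l^k
  have hsmod : ∀ (z : ℕ) (t : T), z • t = (z % l^k) • t := by
    intro z t
    conv_lhs => rw [← Nat.div_add_mod z (l^k), add_nsmul, mul_smul, hPk, zero_add]
  -- the bijection
  haveI hNek : NeZero (l^k) := ⟨pow_ne_zero _ hl.pos.ne'⟩
  set f : ZMod (l^k) × ZMod (l^k) × W → T :=
    fun p => p.1.val • x + p.2.1.val • y + (p.2.2 : T) with hf_def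
  have hlamxf : ∀ p, lam x (f p) = (p.2.1.val : ZMod (l^m)) * ε := by
    intro p
    rw [hf_def]
    simp only
    rw [hR, hR, hRn, hRn, halt, smul_zero, hxy, p.2.2.2.1, add_zero, zero_add, nsmul_eq_mul]
  have hlamyf : ∀ p, lam y (f p) = -((p.1.val : ZMod (l^m)) * ε) := by
    intro p
    rw [hf_def]
    simp only
    rw [hR, hR, hRn, hRn, halt, smul_zero, hyx, p.2.2.2.2, add_zero, add_zero, nsmul_eq_mul]
    ring
  have hf_inj : Function.Injective f := by
    intro p q hpq
    have hb : p.2.1 = q.2.1 := by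
      have h1 := hlamxf p
      rw [hpq, hlamxf q] at h1
      have h2 := zmod_cancel_eps l m k hl hkm _ _ h1.symm
      rwa [ZMod.natCast_rightInverse, ZMod.natCast_rightInverse] at h2
    have ha : p.1 = q.1 := by
      have h1 := hlamyf p
      rw [hpq, hlamyf q] at h1
      have h1' : ((q.1.val : ZMod (l^m))) * ε = ((p.1.val : ZMod (l^m))) * ε := neg_injective h1
      have h2 := zmod_cancel_eps l m k hl hkm _ _ h1'
      rw [ZMod.natCast_rightInverse, ZMod.natCast_rightInverse] at h2
      exact h2.symm
    have hw : p.2.2 = q.2.2 := by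
      rw [hf_def] at hpq
      simp only [ha, hb] at hpq
      have := add_left_cancel hpq
      exact Subtype.ext this
    exact Prod.ext ha (Prod.ext hb hw)
  have hf_surj : Function.Surjective f := by
    intro t
    obtain ⟨a, b, w, hwW, ht⟩ := hdecomp t
    refine ⟨((a.val : ZMod (l^k)), (b.val : ZMod (l^k)), ⟨w, hwW⟩), ?_⟩
    rw [hf_def]
    simp only
    rw [ZMod.val_natCast, ZMod.val_natCast, ← hsmod, ← hsmod, ← hzsmul, ← hzsmul]
    exact ht.symm
  have hcardT : Nat.card T = l^k * (l^k * Nat.card W) := by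
    rw [← Nat.card_eq_of_bijective f ⟨hf_inj, hf_surj⟩, Nat.card_prod, Nat.card_prod,
      Nat.card_zmod]
  -- nondegeneracy on W
  have hndW : ∀ w : W, (∀ w' : W, lam (w : T) (w' : T) = 0) → w = 0 := by
    intro w hw
    have h0 : ∀ t : T, lam (w : T) t = 0 := by
      intro t
      obtain ⟨a, b, w', hw'W, ht⟩ := hdecomp t
      have hx0 : lam (w : T) x = 0 := by rw [hskew, w.2.1, neg_zero]
      have hy0 : lam (w : T) y = 0 := by rw [hskew, w.2.2, neg_zero]
      rw [ht, hR, hR, hRz, hRz, hx0, hy0, hw ⟨w', hw'W⟩, mul_zero, mul_zero]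
      ring
    exact Subtype.ext (hnd _ h0)
  -- recursion
  have hWlt : Nat.card W < n := by
    have hpos : 0 < Nat.card W := Nat.card_pos
    have hlk : 1 < l^k := by
      calc 1 < l := hl.one_lt
        _ = l^1 := (pow_one l).symm
        _ ≤ l^k := Nat.pow_le_pow_right hl.pos hk1
    rw [← hcard, hcardT]
    have h2 : 1 * Nat.card W < (l^k*l^k) * Nat.card W :=
      (Nat.mul_lt_mul_right hpos).mpr (by nlinarith)
    calc Nat.card W = 1 * Nat.card W := (one_mul _).symm
      _ < (l^k*l^k) * Nat.card W := h2
      _ = l^k * (l^k * Nat.card W) := by ring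
  have hWsq : IsSquare (Nat.card W) := by
    refine ih (Nat.card W) hWlt W inferInstance inferInstance
      (fun a b => lam (a : T) (b : T)) ?_ ?_ ?_ hndW ?_ rfl
    · intro a b c
      show lam ((a + b : W) : T) _ = _
      rw [AddSubgroup.coe_add, hL]
    · intro a b c
      show lam _ ((b + c : W) : T) = _
      rw [AddSubgroup.coe_add, hR]
    · intro a b
      exact hskew _ _
    · intro t
      apply Subtype.ext
      rw [AddSubgroup.coe_nsmul]
      exact hexp (t : T)
  obtain ⟨r, hr⟩ := hWsq
  refine ⟨l^k * r, ?_⟩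
  rw [← hcard, hcardT, hr]
  ring

set_option maxHeartbeats 2000000 in
theorem stmt8 (l : ℕ) [Fact l.Prime] (hodd : l ≠ 2)
    (H : Type*) [AddCommGroup H] [Module ℤ_[l] H]
    [Module.Free ℤ_[l] H] [Module.Finite ℤ_[l] H]
    (σ : H ≃ₗ[ℤ_[l]] H)
    (B : H →ₗ[ℤ_[l]] H →ₗ[ℤ_[l]] ℤ_[l])
    (hsymm : ∀ x y : H, B x y = B y x)
    (hinv : ∀ x y : H, B (σ x) (σ y) = B x y)
    (hperf : Function.Bijective fun x : H => B x) :
    Finite (Submodule.torsion ℤ_[l]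
      (H ⧸ LinearMap.range (LinearMap.id - σ.toLinearMap))) ∧
    IsSquare (Nat.card (Submodule.torsion ℤ_[l]
      (H ⧸ LinearMap.range (LinearMap.id - σ.toLinearMap)))) := by
  classical
  set A : H →ₗ[ℤ_[l]] H := LinearMap.id - σ.toLinearMap with hA_def
  set M : Submodule ℤ_[l] H := LinearMap.range A with hM_def
  set T : Submodule ℤ_[l] (H ⧸ M) := Submodule.torsion ℤ_[l] (H ⧸ M) with hT_def
  set π : H →ₗ[ℤ_[l]] H ⧸ M := M.mkQ with hπ_def
  have hl : l.Prime := Fact.out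
  -- basic facts about A and B
  have hA : ∀ h : H, A h = h - σ h := by
    intro h; simp [hA_def]
  have hBσ : ∀ a b : H, B a (σ b) = B (σ.symm a) b := by
    intro a b
    conv_lhs => rw [← σ.apply_symm_apply a]
    rw [hinv]
  have hBσ' : ∀ a b : H, B a (σ.symm b) = B (σ a) b := by
    intro a b
    conv_rhs => rw [← σ.apply_symm_apply b]
    rw [hinv]
  have hI1 : ∀ y w : H, B y (A w) = B (y - σ.symm y) w := by
    intro y w
    rw [hA, map_sub, hBσ, map_sub, LinearMap.sub_apply]
  have hI2 : ∀ u : H, (∀ z : H, B u (A z) = 0) → A u = 0 := by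
    intro u hu
    have h1 : B (u - σ.symm u) = 0 := by
      apply LinearMap.ext
      intro z
      have := hu z
      rw [hI1] at this
      simpa using this
    have h2 : u - σ.symm u = 0 := by
      apply hperf.1
      simpa using h1
    have h3 : σ.symm u = u := by
      rw [sub_eq_zero] at h2
      exact h2.symm
    have h4 : σ u = u := by
      conv_lhs => rw [← h3]
      exact σ.apply_symm_apply u
    rw [hA, h4, sub_self]
  have hK1 : ∀ k z : H, A k = 0 → B k (A z) = 0 := by
    intro k z hk
    have hσk : σ k = k := by
      have := hA k
      rw [hk] at this
      have := sub_eq_zero.mp this.symm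
      exact this.symm
    have hsk : σ.symm k = k := by
      conv_lhs => rw [← hσk]
      exact σ.symm_apply_apply k
    rw [hI1, hsk, sub_self, map_zero, LinearMap.zero_apply]
  have hK2 : ∀ (c : ℤ_[l]) (x y w : H), A y = c • x →
      B y (A w) = -(c • B (σ.symm x) w) := by
    intro c x y w hy
    rw [hI1]
    have h1 : y - σ.symm y = -(c • σ.symm x) := by
      have h2 : σ.symm (A y) = σ.symm y - y := by
        rw [hA, map_sub]
        congr 1
        exact σ.symm_apply_apply y
      have h3 : σ.symm (c • x) = c • σ.symm x := map_smul _ _ _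
      rw [hy, h3] at h2
      rw [show y - σ.symm y = -(σ.symm y - y) from (neg_sub _ _).symm, ← h2]
    rw [h1, map_neg, map_smul, LinearMap.neg_apply, LinearMap.smul_apply]
  have hYS : ∀ (c : ℤ_[l]) (x y : H), A y = c • x → y - σ.symm y = -(c • σ.symm x) := by
    intro c x y hy
    have h2 : σ.symm (A y) = σ.symm y - y := by
      rw [hA, map_sub]
      congr 1
      exact σ.symm_apply_apply y
    have h3 : σ.symm (c • x) = c • σ.symm x := map_smul _ _ _
    rw [hy, h3] at h2
    rw [show y - σ.symm y = -(σ.symm y - y) from (neg_sub _ _).symm, ← h2]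
  have hK3 : ∀ (c : ℤ_[l]) (x y x' y' : H), c ≠ 0 → A y = c • x → A y' = c • x' →
      B y x' + B y' x = c • B x x' := by
    intro c x y x' y' hc hy hy'
    have hσy : σ y = y - c • x := by
      have h1 : y - σ y = c • x := by rw [← hA, hy]
      rw [← h1]; abel
    have e1 : B y (A y') = c • B y x' := by rw [hy', map_smul]
    have e2 : B y' (A y) = c • B y' x := by rw [hy, map_smul]
    have e3 : B y (A y') = -(c • B (σ.symm x) y') := by
      rw [hI1, hYS c x y hy, map_neg, map_smul, LinearMap.neg_apply, LinearMap.smul_apply]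
    have e4 : B y' (A y) = c • B x y' := by
      rw [hI1 y' y, map_sub, LinearMap.sub_apply]
      rw [hsymm y' y, hsymm (σ.symm y') y, hBσ', hσy, map_sub, map_smul,
        LinearMap.sub_apply, LinearMap.smul_apply]
      abel
    have e5 : B (x - σ.symm x) y' = c • B x x' := by
      rw [map_sub, LinearMap.sub_apply]
      rw [show B (σ.symm x) y' = B x (σ y') from (hBσ x y').symm]
      rw [← map_sub (B x)]
      rw [show y' - σ y' = A y' from (hA y').symm, hy', map_smul]
    have main : c • (B y x' + B y' x) = c • (c • B x x') := by
      rw [smul_add, ← e1, ← e2, e3, e4]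
      have h6 : -(c • B (σ.symm x) y') + c • B x y'
          = c • (B x y' - B (σ.symm x) y') := by
        rw [smul_sub]; abel
      rw [h6, show B x y' - B (σ.symm x) y' = B (x - σ.symm x) y' by
        rw [map_sub, LinearMap.sub_apply], e5]
    have hmc : c * (B y x' + B y' x) = c * (c • B x x') := by
      simpa [smul_eq_mul] using main
    have := mul_left_cancel₀ hc hmc
    simpa [smul_eq_mul] using this
  -- finiteness and exponent
  have hlR : (l : ℤ_[l]) ≠ 0 := by exact_mod_cast hl.pos.ne'
  have hTfg : T.FG := (isNoetherian_def.mp inferInstance) T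
  obtain ⟨s, hs⟩ := hTfg
  have hgen : ∀ g ∈ s, ∃ j : ℕ, (l : ℤ_[l])^j • g = 0 := by
    intro g hg
    have hgT : g ∈ T := by rw [← hs]; exact Submodule.subset_span hg
    obtain ⟨⟨r, hr⟩, hrg⟩ := hgT
    have hrne : r ≠ 0 := nonZeroDivisors.ne_zero hr
    obtain ⟨n, u, hu⟩ := IsDiscreteValuationRing.eq_unit_mul_pow_irreducible hrne
      (PadicInt.prime_p (p := l)).irreducible
    refine ⟨n, ?_⟩
    have h1 : ((u : ℤ_[l]) * (l:ℤ_[l])^n) • g = 0 := by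
      rw [← hu]
      exact hrg
    have h2 : (↑u⁻¹ : ℤ_[l]) • (((u:ℤ_[l]) * (l:ℤ_[l])^n) • g) = 0 := by rw [h1, smul_zero]
    rwa [← mul_smul, ← mul_assoc, Units.inv_mul, one_mul] at h2
  choose! j hj using hgen
  set m : ℕ := s.sup j with hm_def
  set lm : ℤ_[l] := (l : ℤ_[l])^m with hlm_def
  have hlm_ne : lm ≠ 0 := pow_ne_zero _ hlR
  have hTm : ∀ q ∈ T, lm • q = 0 := by
    have hle : T ≤ Submodule.torsionBy ℤ_[l] (H ⧸ M) lm := by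
      rw [← hs, Submodule.span_le]
      intro g hg
      rw [SetLike.mem_coe, Submodule.mem_torsionBy_iff]
      have h1 := hj g hg
      have h2 : lm = (l:ℤ_[l])^(m - j g) * (l:ℤ_[l])^(j g) := by
        rw [hlm_def, ← pow_add]
        congr 1
        have := Finset.le_sup (f := j) hg
        omega
      rw [h2, mul_smul, h1, smul_zero]
    intro q hq
    exact (Submodule.mem_torsionBy_iff _ _).mp (hle hq)
  -- key: reduce coefficients mod l^m
  have hker : ∀ r : ℤ_[l], PadicInt.toZModPow m r = 0 ↔ lm ∣ r := by
    intro r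
    have h0 : (PadicInt.toZModPow m r = 0) ↔ r ∈ RingHom.ker (PadicInt.toZModPow (p := l) m) :=
      RingHom.mem_ker.symm
    rw [h0, PadicInt.ker_toZModPow, Ideal.mem_span_singleton, hlm_def]
  have hcoef : ∀ (c : ℤ_[l]) (q : H ⧸ M), q ∈ T →
      (((PadicInt.toZModPow m c).val : ℕ) : ℤ_[l]) • q = c • q := by
    intro c q hq
    set c' : ℕ := (PadicInt.toZModPow m c).val with hc'_def
    have hNe : NeZero (l^m) := ⟨pow_ne_zero _ hl.pos.ne'⟩
    have h1 : PadicInt.toZModPow m ((c' : ℤ_[l]) - c) = 0 := by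
      rw [map_sub, map_natCast, hc'_def, ZMod.natCast_rightInverse, sub_self]
    obtain ⟨d, hd⟩ := (hker _).mp h1
    have h2 : (c' : ℤ_[l]) • q - c • q = (lm * d) • q := by
      rw [← hd, sub_smul]
    rw [mul_comm, mul_smul, hTm q hq, smul_zero] at h2
    exact sub_eq_zero.mp h2
  -- finiteness
  have hNe : NeZero (l^m) := ⟨pow_ne_zero _ hl.pos.ne'⟩
  have hsT : ∀ g : {x // x ∈ s}, (g : H ⧸ M) ∈ T := by
    intro g
    rw [← hs]
    exact Submodule.subset_span g.2
  have hfin : Finite ↥T := by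
    set F : ({x // x ∈ s} → ZMod (l^m)) → ↥T := fun f =>
      ⟨∑ g ∈ s.attach, ((f g).val : ℕ) • (g : H ⧸ M),
        Submodule.sum_mem T (fun g _ => Submodule.smul_of_tower_mem T _ (hsT g))⟩ with hF_def
    apply Finite.of_surjective F
    intro t
    have ht : (t : H ⧸ M) ∈ Submodule.span ℤ_[l] (s : Set (H ⧸ M)) := by rw [hs]; exact t.2
    rw [Submodule.mem_span_finset] at ht
    obtain ⟨f, -, hf⟩ := ht
    refine ⟨fun g => PadicInt.toZModPow m (f (g : H ⧸ M)), ?_⟩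
    apply Subtype.ext
    rw [hF_def]
    show (∑ g ∈ s.attach, (((PadicInt.toZModPow m (f (g : H ⧸ M))).val : ℕ) •
      (g : H ⧸ M))) = (t : H ⧸ M)
    rw [← hf]
    rw [Finset.sum_attach s (fun q => (((PadicInt.toZModPow m (f q)).val : ℕ) • q))]
    apply Finset.sum_congr rfl
    intro g hg
    have hgT : g ∈ T := by rw [← hs]; exact Submodule.subset_span hg
    rw [← hcoef (f g) g hgT, Nat.cast_smul_eq_nsmul]
  -- choice of representatives
  have hy_ex : ∀ t : ↥T, ∃ p : H × H, π p.1 = (t : H ⧸ M) ∧ A p.2 = lm • p.1 := by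
    intro t
    obtain ⟨x, hx⟩ := Submodule.mkQ_surjective M (t : H ⧸ M)
    have hx' : π x = (t : H ⧸ M) := hx
    have h1 : π (lm • x) = 0 := by rw [map_smul, hx']; exact hTm _ t.2
    have h2 : lm • x ∈ M := by
      rw [← Submodule.ker_mkQ M]
      exact LinearMap.mem_ker.mpr h1
    rw [hM_def] at h2
    obtain ⟨y, hy⟩ := h2
    exact ⟨⟨x, y⟩, hx', hy⟩
  choose pxy hpx hpy using hy_ex
  set lam : ↥T → ↥T → ZMod (l^m) := fun t t' =>
    PadicInt.toZModPow m (B (pxy t).2 (pxy t').1) with hlam_def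
  have hcongr : ∀ a b : ℤ_[l], lm ∣ a - b →
      PadicInt.toZModPow m a = PadicInt.toZModPow m b := by
    intro a b hab
    have h1 : PadicInt.toZModPow m (a - b) = 0 := (hker _).mpr hab
    rw [map_sub] at h1
    exact sub_eq_zero.mp h1
  have hSrange : ∀ x' : H, π x' ∈ T → ∃ w, A w = lm • x' := by
    intro x' hx'
    have h1 : π (lm • x') = 0 := by rw [map_smul]; exact hTm _ hx'
    have h2 : lm • x' ∈ M := by
      rw [← Submodule.ker_mkQ M]
      exact LinearMap.mem_ker.mpr h1
    rw [hM_def] at h2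
    exact h2
  have hK1' : ∀ k x' : H, A k = 0 → π x' ∈ T → B k x' = 0 := by
    intro k x' hk hx'
    obtain ⟨w, hw⟩ := hSrange x' hx'
    have h1 : lm • B k x' = 0 := by
      rw [← map_smul (B k), ← hw, hK1 k w hk]
    rcases smul_eq_zero.mp h1 with h | h
    · exact absurd h hlm_ne
    · exact h
  have hwd : ∀ (x₁ y₁ x₂ y₂ x'₁ x'₂ : H), A y₁ = lm • x₁ → A y₂ = lm • x₂ →
      π x₁ = π x₂ → π x'₁ = π x'₂ → π x'₁ ∈ T →
      PadicInt.toZModPow m (B y₁ x'₁) = PadicInt.toZModPow m (B y₂ x'₂) := by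
    intro x₁ y₁ x₂ y₂ x'₁ x'₂ hy₁ hy₂ hx hx' hT'
    have hright : PadicInt.toZModPow m (B y₂ x'₁) = PadicInt.toZModPow m (B y₂ x'₂) := by
      apply hcongr
      have h1 : x'₁ - x'₂ ∈ M := by
        rw [← Submodule.ker_mkQ M]
        apply LinearMap.mem_ker.mpr
        rw [map_sub, sub_eq_zero]
        exact hx'
      rw [hM_def] at h1
      obtain ⟨w', hw'⟩ := h1
      have h2 : B y₂ x'₁ - B y₂ x'₂ = B y₂ (A w') := by rw [hw', map_sub]
      rw [h2, hK2 lm x₂ y₂ w' hy₂, smul_eq_mul]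
      exact dvd_neg.mpr (dvd_mul_right _ _)
    have hleft : PadicInt.toZModPow m (B y₁ x'₁) = PadicInt.toZModPow m (B y₂ x'₁) := by
      have h1 : x₁ - x₂ ∈ M := by
        rw [← Submodule.ker_mkQ M]
        apply LinearMap.mem_ker.mpr
        rw [map_sub, sub_eq_zero]
        exact hx
      rw [hM_def] at h1
      obtain ⟨w, hw⟩ := h1
      have hk : A (y₁ - y₂ - lm • w) = 0 := by
        rw [map_sub, map_sub, map_smul, hy₁, hy₂, hw, smul_sub]
        abel
      have h2 : B (y₁ - y₂ - lm • w) x'₁ = 0 := hK1' _ _ hk hT'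
      have h4 : B (y₁ - y₂ - lm • w) x'₁
          = B y₁ x'₁ - B y₂ x'₁ - lm • B w x'₁ := by
        rw [map_sub, map_sub, map_smul, LinearMap.sub_apply, LinearMap.sub_apply,
          LinearMap.smul_apply]
      rw [h4] at h2
      have h3 : B y₁ x'₁ - B y₂ x'₁ = lm • B w x'₁ := by
        have h5 := sub_eq_zero.mp h2
        exact h5
      apply hcongr
      rw [h3, smul_eq_mul]
      exact dvd_mul_right _ _
    rw [hleft, hright]
  have hmemT : ∀ t : ↥T, π (pxy t).1 ∈ T := by
    intro t
    rw [hpx t]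
    exact t.2
  have hlamL : ∀ a b c : ↥T, lam (a + b) c = lam a c + lam b c := by
    intro a b c
    have h1 : A ((pxy a).2 + (pxy b).2) = lm • ((pxy a).1 + (pxy b).1) := by
      rw [map_add, hpy a, hpy b, smul_add]
    have h2 : π ((pxy (a + b)).1) = π ((pxy a).1 + (pxy b).1) := by
      rw [map_add, hpx, hpx, hpx]
      rfl
    have h3 := hwd _ _ _ _ _ _ (hpy (a + b)) h1 h2 rfl (hmemT c)
    simp only [hlam_def]
    rw [h3, map_add, LinearMap.add_apply, map_add]
  have hlamR : ∀ a b c : ↥T, lam a (b + c) = lam a b + lam a c := by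
    intro a b c
    have h2 : π ((pxy (b + c)).1) = π ((pxy b).1 + (pxy c).1) := by
      rw [map_add, hpx, hpx, hpx]
      rfl
    have hmem : π ((pxy (b + c)).1) ∈ T := hmemT (b + c)
    have h3 := hwd _ _ _ _ _ _ (hpy a) (hpy a) rfl h2 hmem
    have h4 : B (pxy a).2 ((pxy b).1 + (pxy c).1)
        = B (pxy a).2 (pxy b).1 + B (pxy a).2 (pxy c).1 := map_add _ _ _
    simp only [hlam_def]
    rw [h3, h4, map_add]
  have hlam_skew : ∀ a b : ↥T, lam b a = - lam a b := by
    intro a b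
    have h := hK3 lm (pxy a).1 (pxy a).2 (pxy b).1 (pxy b).2 hlm_ne (hpy a) (hpy b)
    have h1 : PadicInt.toZModPow m (B (pxy a).2 (pxy b).1 + B (pxy b).2 (pxy a).1) = 0 := by
      rw [h]
      apply (hker _).mpr
      rw [smul_eq_mul]
      exact dvd_mul_right _ _
    rw [map_add] at h1
    exact eq_neg_of_add_eq_zero_right h1
  -- nondegeneracy
  have hlam_nd : ∀ t : ↥T, (∀ t', lam t t' = 0) → t = 0 := by
    intro t ht
    have hS : ∀ s0 : H, π s0 ∈ T → lm ∣ B (pxy t).2 s0 := by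
      intro s0 hs0
      have h1 : lam t ⟨π s0, hs0⟩ = 0 := ht _
      have h2 : PadicInt.toZModPow m (B (pxy t).2 s0)
          = PadicInt.toZModPow m (B (pxy t).2 (pxy ⟨π s0, hs0⟩).1) :=
        hwd _ _ _ _ _ _ (hpy t) (hpy t) rfl (hpx ⟨π s0, hs0⟩).symm hs0
      have h1' : PadicInt.toZModPow m (B (pxy t).2 (pxy ⟨π s0, hs0⟩).1) = 0 := h1
      rw [h1'] at h2
      exact (hker _).mp h2
    set S : Submodule ℤ_[l] H := T.comap π with hS_def
    have hdiv : ∀ s0 : ↥S, ∃ c, B (pxy t).2 (s0 : H) = lm * c := by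
      intro s0
      obtain ⟨c, hc⟩ := hS (s0 : H) s0.2
      exact ⟨c, hc⟩
    choose g0 hg0 using hdiv
    set gS : ↥S →ₗ[ℤ_[l]] ℤ_[l] :=
      { toFun := g0
        map_add' := by
          intro a b
          apply mul_left_cancel₀ hlm_ne
          calc lm * g0 (a + b) = B (pxy t).2 ((a + b : ↥S) : H) := (hg0 _).symm
            _ = B (pxy t).2 ((a : H) + (b : H)) := by rw [Submodule.coe_add]
            _ = B (pxy t).2 (a : H) + B (pxy t).2 (b : H) := map_add _ _ _
            _ = lm * g0 a + lm * g0 b := by rw [hg0 a, hg0 b]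
            _ = lm * (g0 a + g0 b) := by ring
        map_smul' := by
          intro c a
          apply mul_left_cancel₀ hlm_ne
          calc lm * g0 (c • a) = B (pxy t).2 ((c • a : ↥S) : H) := (hg0 _).symm
            _ = B (pxy t).2 (c • (a : H)) := by rw [Submodule.coe_smul]
            _ = c • B (pxy t).2 (a : H) := map_smul _ _ _
            _ = c * (lm * g0 a) := by rw [hg0 a, smul_eq_mul]
            _ = lm * (RingHom.id ℤ_[l] c • g0 a) := by
                simp [smul_eq_mul]
                ring } with hgS_def
    have hgS_app : ∀ s0 : ↥S, lm * gS s0 = B (pxy t).2 (s0 : H) := fun s0 => (hg0 s0).symm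
    -- H ⧸ S is torsion-free, hence free, hence projective
    haveI hnzs : NoZeroSMulDivisors ℤ_[l] (H ⧸ S) := by
      constructor
      intro c q hcq
      by_cases hc : c = 0
      · exact Or.inl hc
      refine Or.inr ?_
      obtain ⟨h0, rfl⟩ := Submodule.mkQ_surjective S q
      rw [← map_smul] at hcq
      have h1 : c • h0 ∈ S := by
        rw [← Submodule.ker_mkQ S]
        exact LinearMap.mem_ker.mpr hcq
      have h2 : π (c • h0) ∈ T := h1
      rw [map_smul] at h2
      have h3 : π h0 ∈ T := by
        obtain ⟨a, ha⟩ := h2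
        refine ⟨⟨(a : ℤ_[l]) * c, mul_mem a.2 (mem_nonZeroDivisors_of_ne_zero hc)⟩, ?_⟩
        have ha' : (a : ℤ_[l]) • c • π h0 = 0 := ha
        rw [← mul_smul] at ha'
        exact ha'
      have h4 : h0 ∈ S := h3
      show S.mkQ h0 = 0
      rw [Submodule.mkQ_apply]
      exact (Submodule.Quotient.mk_eq_zero S).mpr h4
    haveI hfree : Module.Free ℤ_[l] (H ⧸ S) := Module.free_of_finite_type_torsion_free'
    obtain ⟨sec, hsec⟩ := Module.projective_lifting_property S.mkQ LinearMap.id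
      (Submodule.mkQ_surjective S)
    have hπS_mem : ∀ h0 : H, h0 - sec (S.mkQ h0) ∈ S := by
      intro h0
      have h5 : S.mkQ (sec (S.mkQ h0)) = S.mkQ h0 := by
        have := LinearMap.congr_fun hsec (S.mkQ h0)
        simpa using this
      have h6 : S.mkQ (h0 - sec (S.mkQ h0)) = 0 := by rw [map_sub, h5, sub_self]
      rw [Submodule.mkQ_apply] at h6
      exact (Submodule.Quotient.mk_eq_zero S).mp h6
    set χ : H →ₗ[ℤ_[l]] ℤ_[l] := gS ∘ₗ LinearMap.codRestrict S
      (LinearMap.id - sec ∘ₗ S.mkQ) (fun h0 => hπS_mem h0) with hχ_def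
    have hχS : ∀ (s0 : H) (hs0 : s0 ∈ S), χ s0 = gS ⟨s0, hs0⟩ := by
      intro s0 hs0
      have h6 : S.mkQ s0 = 0 := by
        rw [Submodule.mkQ_apply]
        exact (Submodule.Quotient.mk_eq_zero S).mpr hs0
      simp only [hχ_def, LinearMap.coe_comp, Function.comp_apply]
      congr 1
      apply Subtype.ext
      simp [h6]
    obtain ⟨w, hw⟩ := hperf.2 χ
    have hBw : ∀ z : H, B w z = χ z := fun z => by rw [← hw]
    have hu : ∀ s0 : H, s0 ∈ S → B ((pxy t).2 - lm • w) s0 = 0 := by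
      intro s0 hs0
      rw [map_sub, map_smul, LinearMap.sub_apply, LinearMap.smul_apply]
      rw [hBw s0, hχS s0 hs0, smul_eq_mul, hgS_app ⟨s0, hs0⟩]
      exact sub_self _
    have hAS : ∀ z : H, A z ∈ S := by
      intro z
      have h7 : π (A z) = 0 := by
        have : A z ∈ M := by rw [hM_def]; exact ⟨z, rfl⟩
        rw [← Submodule.ker_mkQ M] at this
        exact LinearMap.mem_ker.mp this
      show π (A z) ∈ T
      rw [h7]
      exact zero_mem T
    have hAu : A ((pxy t).2 - lm • w) = 0 :=
      hI2 _ (fun z => hu (A z) (hAS z))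
    have h8 : A ((pxy t).2 - lm • w) = lm • ((pxy t).1 - A w) := by
      rw [map_sub, map_smul, hpy t, smul_sub]
    rw [hAu] at h8
    have h9 : (pxy t).1 - A w = 0 := by
      rcases smul_eq_zero.mp h8.symm with h | h
      · exact absurd h hlm_ne
      · exact h
    have h10 : π (pxy t).1 = 0 := by
      have h11 : (pxy t).1 ∈ M := by
        rw [hM_def]
        exact ⟨w, (sub_eq_zero.mp h9).symm⟩
      rw [← Submodule.ker_mkQ M] at h11
      exact LinearMap.mem_ker.mp h11
    have h12 : (t : H ⧸ M) = 0 := by rw [← hpx t, h10]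
    exact Subtype.ext h12
  -- exponent, ℕ-smul version
  have hexpN : ∀ t : ↥T, l ^ m • t = 0 := by
    intro t
    have h1 : ((l ^ m : ℕ) : ℤ_[l]) • t = 0 := by
      apply Subtype.ext
      rw [Submodule.coe_smul]
      show ((l ^ m : ℕ) : ℤ_[l]) • (t : H ⧸ M) = 0
      have h2 : ((l ^ m : ℕ) : ℤ_[l]) = lm := by rw [hlm_def]; push_cast; rfl
      rw [h2]
      exact hTm _ t.2
    rw [← Nat.cast_smul_eq_nsmul ℤ_[l]]
    exact h1
  exact ⟨hfin, square_card_aux l hl hodd m (Nat.card ↥T) ↥T inferInstance hfin lam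
    hlamL hlamR hlam_skew hlam_nd hexpN rfl⟩
end

section
/- Let G be a finite abelian 2-group with a nondegenerate skew-symmetric bilinear pairing ⟨,⟩ : G × G → ℚ/ℤ. If the pairing is alternating (⟨x,x⟩ = 0 for all x), then G is isomorphic to a direct sum A ⊕ A for some finite abelian group A; in particular |G| is a perfect square. -/
set_option maxHeartbeats 1000000

lemma addCircle_exists_zsmul (n : ℕ) (hn : 0 < n) (t s : AddCircle (1 : ℚ))
    (ht : addOrderOf t = n) (hs : n • s = 0) : ∃ c : ℤ, c • t = s := by
  obtain ⟨r, rfl⟩ := QuotientAddGroup.mk_surjective t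
  obtain ⟨q, rfl⟩ := QuotientAddGroup.mk_surjective s
  have hnQ : (n : ℚ) ≠ 0 := by positivity
  have htn : n • (r : AddCircle (1:ℚ)) = 0 := by
    rw [← ht]; exact addOrderOf_nsmul_eq_zero _
  rw [← AddCircle.coe_nsmul, AddCircle.coe_eq_zero_iff] at htn hs
  obtain ⟨m', hm'⟩ := htn
  obtain ⟨m, hm⟩ := hs
  simp only [zsmul_eq_mul, mul_one, nsmul_eq_mul] at hm' hm
  -- hm' : (m' : ℚ) = n * r, hm : (m : ℚ) = n * q
  have hd : Int.gcd m' (n : ℤ) = 1 := by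
    set d : ℕ := Int.gcd m' (n : ℤ) with hdd
    obtain ⟨e, he⟩ : (d : ℤ) ∣ m' := Int.gcd_dvd_left _ _
    obtain ⟨nd, hnd⟩ : d ∣ n := Int.natCast_dvd_natCast.mp (Int.gcd_dvd_right _ _)
    have hd0 : d ≠ 0 := by rintro h0; rw [h0, zero_mul] at hnd; omega
    have hnd0 : nd ≠ 0 := by rintro h0; rw [h0, mul_zero] at hnd; omega
    have hecast : (m' : ℚ) = (d : ℚ) * (e : ℚ) := by exact_mod_cast congrArg Int.cast he
    have hncast : (n : ℚ) = (d : ℚ) * (nd : ℚ) := by exact_mod_cast congrArg Nat.cast hnd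
    have hr : (nd : ℚ) * r = (e : ℚ) := by
      have h1 : (n : ℚ) * ((nd : ℚ) * r) = (n : ℚ) * (e : ℚ) := by
        linear_combination (-(nd:ℚ)) * hm' + (nd : ℚ) * hecast - (e : ℚ) * hncast
      exact mul_left_cancel₀ hnQ h1
    have hzero : nd • (r : AddCircle (1:ℚ)) = 0 := by
      rw [← AddCircle.coe_nsmul, AddCircle.coe_eq_zero_iff]
      exact ⟨e, by simp only [zsmul_eq_mul, nsmul_eq_mul, mul_one]; exact hr.symm⟩
    have hdvd : n ∣ nd := by
      rw [← ht]; exact addOrderOf_dvd_of_nsmul_eq_zero hzero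
    have : n ≤ nd := Nat.le_of_dvd (Nat.pos_of_ne_zero hnd0) hdvd
    nlinarith [Nat.one_le_iff_ne_zero.mpr hd0]
  have hcop : IsCoprime m' (n : ℤ) := Int.isCoprime_iff_gcd_eq_one.mpr hd
  obtain ⟨u, v, huv⟩ := hcop
  have hb : (u : ℚ) * m' + v * n = 1 := by exact_mod_cast congrArg Int.cast huv
  refine ⟨m * u, ?_⟩
  rw [← AddCircle.coe_zsmul]
  have key : ((m*u : ℤ) • r) - q = ((- (m * v) : ℤ) : ℚ) * 1 := by
    push_cast
    rw [zsmul_eq_mul] at *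
    push_cast
    have h2 : (n:ℚ) * ((m:ℚ)*u*r - q) = (n:ℚ) * (-((m:ℚ)*v)) := by
      linear_combination (-(m:ℚ)*u) * hm' + hm + (m:ℚ) * hb
    have := mul_left_cancel₀ hnQ h2
    linarith [this]
  exact ((QuotientAddGroup.eq_iff_sub_mem).mpr ⟨-(m*v), by simpa [zsmul_eq_mul] using key.symm⟩)

lemma key_step : ∀ (N : ℕ) (G : Type) [AddCommGroup G] [Fintype G],
    Fintype.card G ≤ N →
    (∀ x : G, ∃ k : ℕ, 2 ^ k • x = 0) →
    ∀ (b : G →+ G →+ AddCircle (1 : ℚ)),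
    (∀ x : G, (∀ y : G, b x y = 0) → x = 0) →
    (∀ x y : G, b y x = - b x y) →
    (∀ x : G, b x x = 0) →
    (∃ (A : Type) (_ : AddCommGroup A), Nonempty (G ≃+ A × A)) ∧
    IsSquare (Fintype.card G) := by
  intro N
  induction N with
  | zero =>
    intro G _ _ hcard _ b _ _ _
    exfalso
    have := Fintype.card_pos (α := G)
    omega
  | succ N ih =>
    intro G _ _ hcard hG b hnd hskew halt
    by_cases htriv : ∀ g : G, g = 0
    · haveI : Subsingleton G := ⟨fun a b => by rw [htriv a, htriv b]⟩
      have hcard1 : Fintype.card G = 1 := Fintype.card_eq_one_iff.mpr ⟨0, fun a => htriv a⟩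
      refine ⟨⟨PUnit, inferInstance, ⟨?_⟩⟩, 1, by omega⟩
      exact { toFun := fun _ => 0, invFun := fun _ => 0,
              left_inv := fun a => (htriv a).symm,
              right_inv := fun p => Subsingleton.elim _ _,
              map_add' := fun _ _ => Subsingleton.elim _ _ }
    · push_neg at htriv
      obtain ⟨x0, hx0⟩ := htriv
      have horder : ∀ g : G, ∃ j : ℕ, addOrderOf g = 2 ^ j := by
        intro g
        obtain ⟨k, hk⟩ := hG g
        obtain ⟨j, -, hj⟩ := (Nat.dvd_prime_pow Nat.prime_two).mp
          (addOrderOf_dvd_of_nsmul_eq_zero hk)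
        exact ⟨j, hj⟩
      obtain ⟨x, -, hx⟩ := Finset.exists_max_image (Finset.univ : Finset G) addOrderOf
        ⟨x0, Finset.mem_univ _⟩
      obtain ⟨k, hk⟩ := horder x
      have hdvd : ∀ g : G, addOrderOf g ∣ 2 ^ k := by
        intro g
        obtain ⟨j, hj⟩ := horder g
        have hle : (2:ℕ) ^ j ≤ 2 ^ k := by
          rw [← hj, ← hk]; exact hx g (Finset.mem_univ _)
        exact hj ▸ pow_dvd_pow 2 ((Nat.pow_le_pow_iff_right one_lt_two).mp hle)
      have hsmul : ∀ g : G, (2 ^ k) • g = 0 := fun g =>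
        addOrderOf_dvd_iff_nsmul_eq_zero.mp (hdvd g)
      have hk1 : 1 ≤ k := by
        by_contra h
        have hk0 : k = 0 := by omega
        have := hsmul x0
        rw [hk0, pow_zero, one_smul] at this
        exact hx0 this
      have hzne : (2 ^ (k-1)) • x ≠ 0 := by
        intro h
        have hdd := addOrderOf_dvd_iff_nsmul_eq_zero.mpr h
        rw [hk] at hdd
        have := (Nat.pow_le_pow_iff_right one_lt_two).mp
          (Nat.le_of_dvd (by positivity) hdd)
        omega
      have hex : ¬ ∀ y : G, b ((2 ^ (k-1)) • x) y = 0 := fun h => hzne (hnd _ h)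
      push_neg at hex
      obtain ⟨y, hy⟩ := hex
      set t := b x y with htdef
      have hbsm : ∀ (m : ℕ) (g : G), b (m • x) g = m • (b x g) := by
        intro m g; rw [map_nsmul]; rfl
      have hyt : (2 ^ (k-1)) • t ≠ 0 := by
        intro h; exact hy (by rw [hbsm]; exact h)
      have htn : (2 ^ k) • t = 0 := by
        rw [← hbsm, hsmul x]; simp
      have htord : addOrderOf t = 2 ^ k := by
        obtain ⟨j, hjk, hj⟩ := (Nat.dvd_prime_pow Nat.prime_two).mp
          (addOrderOf_dvd_of_nsmul_eq_zero htn)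
        rcases eq_or_lt_of_le hjk with h | h
        · rw [hj, h]
        · exfalso
          apply hyt
          apply addOrderOf_dvd_iff_nsmul_eq_zero.mp
          rw [hj]
          exact pow_dvd_pow 2 (by omega)
      haveI : NeZero (2 ^ k) := ⟨by positivity⟩
      have h2k : 2 ≤ 2 ^ k := by
        calc 2 = 2 ^ 1 := (pow_one 2).symm
        _ ≤ 2 ^ k := Nat.pow_le_pow_right (by norm_num) hk1
      -- the maps
      have hxlift : (zmultiplesHom G x) ((2 ^ k : ℕ) : ℤ) = 0 := by
        simp only [zmultiplesHom_apply, natCast_zsmul]; exact hsmul x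
      have hylift : (zmultiplesHom G y) ((2 ^ k : ℕ) : ℤ) = 0 := by
        simp only [zmultiplesHom_apply, natCast_zsmul]; exact hsmul y
      set zx : ZMod (2 ^ k) →+ G := ZMod.lift (2 ^ k) ⟨zmultiplesHom G x, hxlift⟩ with hzx
      set zy : ZMod (2 ^ k) →+ G := ZMod.lift (2 ^ k) ⟨zmultiplesHom G y, hylift⟩ with hzy
      set ρ : ZMod (2 ^ k) × ZMod (2 ^ k) →+ G := AddMonoidHom.coprod zx zy with hρdef
      have hρ : ∀ a c : ℤ, ρ ((a : ZMod (2 ^ k)), (c : ZMod (2 ^ k))) = a • x + c • y := by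
        intro a c
        simp only [hρdef, AddMonoidHom.coprod_apply, hzx, hzy, ZMod.lift_coe,
          zmultiplesHom_apply]
      have hbx : ∀ a c : ℤ, b x (a • x + c • y) = c • t := by
        intro a c
        simp [map_add, map_zsmul, halt x, ← htdef]
      have hby : ∀ a c : ℤ, b y (a • x + c • y) = -(a • t) := by
        intro a c
        simp [map_add, map_zsmul, hskew x y, halt y, ← htdef, smul_neg]
      set K : AddSubgroup G := (b x).ker ⊓ (b y).ker with hKdef
      have hKmem : ∀ g : G, g ∈ K ↔ b x g = 0 ∧ b y g = 0 := by
        intro g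
        simp [hKdef, AddSubgroup.mem_inf, AddMonoidHom.mem_ker]
      set f : (ZMod (2 ^ k) × ZMod (2 ^ k)) × K →+ G := AddMonoidHom.coprod ρ K.subtype
        with hfdef
      have hfapp : ∀ (p : ZMod (2 ^ k) × ZMod (2 ^ k)) (u : K), f (p, u) = ρ p + u := by
        intro p u; simp [hfdef]
      have hinj : Function.Injective f := by
        rw [injective_iff_map_eq_zero]
        rintro ⟨⟨a, c⟩, u⟩ hf
        obtain ⟨a', rfl⟩ := ZMod.intCast_surjective a
        obtain ⟨c', rfl⟩ := ZMod.intCast_surjective c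
        rw [hfapp, hρ] at hf
        have h1 : b x (a' • x + c' • y) + b x u = 0 := by
          rw [← map_add]; rw [hf]; simp
        have h2 : b y (a' • x + c' • y) + b y u = 0 := by
          rw [← map_add]; rw [hf]; simp
        rw [hbx, ((hKmem u).mp u.2).1, add_zero] at h1
        rw [hby, ((hKmem u).mp u.2).2, add_zero] at h2
        have hdvdc : ((2 ^ k : ℕ) : ℤ) ∣ c' := by
          have := addOrderOf_dvd_iff_zsmul_eq_zero.mpr h1
          rwa [htord] at this
        have hdvda : ((2 ^ k : ℕ) : ℤ) ∣ a' := by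
          have h2' : a' • t = 0 := neg_eq_zero.mp h2
          have := addOrderOf_dvd_iff_zsmul_eq_zero.mpr h2'
          rwa [htord] at this
        have hc : (c' : ZMod (2 ^ k)) = 0 :=
          (ZMod.intCast_zmod_eq_zero_iff_dvd _ _).mpr hdvdc
        have ha : (a' : ZMod (2 ^ k)) = 0 :=
          (ZMod.intCast_zmod_eq_zero_iff_dvd _ _).mpr hdvda
        have hax : a' • x = 0 := addOrderOf_dvd_iff_zsmul_eq_zero.mp
          (by rw [hk]; exact_mod_cast hdvda)
        have hcy : c' • y = 0 := addOrderOf_dvd_iff_zsmul_eq_zero.mp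
          (dvd_trans (Int.natCast_dvd_natCast.mpr (hdvd y)) hdvdc)
        have hu : (u : G) = 0 := by
          rw [hax, hcy] at hf
          simpa using hf
        refine Prod.ext (Prod.ext ha hc) (Subtype.ext (by simpa using hu))
      have hsurj : Function.Surjective f := by
        intro g
        have h1 : (2 ^ k : ℕ) • (b x g) = 0 := by
          have : b ((2 ^ k : ℕ) • x) g = (2 ^ k : ℕ) • (b x g) := hbsm _ g
          rw [hsmul x] at this; simpa using this.symm
        have h2 : (2 ^ k : ℕ) • (b y g) = 0 := by
          have : b ((2 ^ k : ℕ) • y) g = (2 ^ k : ℕ) • (b y g) := by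
            rw [map_nsmul]; rfl
          rw [hsmul y] at this; simpa using this.symm
        obtain ⟨cg, hcg⟩ := addCircle_exists_zsmul (2 ^ k) (by positivity) t _ htord h1
        obtain ⟨ag, hag⟩ := addCircle_exists_zsmul (2 ^ k) (by positivity) t _ htord h2
        have hmem : g - ((-ag : ℤ) • x + (cg : ℤ) • y) ∈ K := by
          rw [hKmem]
          constructor
          · rw [map_sub, hbx, hcg, sub_self]
          · rw [map_sub, hby, neg_zsmul, neg_neg, hag, sub_self]
        refine ⟨⟨((-ag : ℤ), (cg : ℤ)), ⟨_, hmem⟩⟩, ?_⟩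
        rw [hfapp, hρ]
        simp
      have e : (ZMod (2 ^ k) × ZMod (2 ^ k)) × K ≃+ G := AddEquiv.ofBijective f ⟨hinj, hsurj⟩
      haveI : Fintype K := Fintype.ofFinite K
      have hcardG : Fintype.card G = 2 ^ k * 2 ^ k * Fintype.card K := by
        rw [← Fintype.card_congr e.toEquiv]
        simp [Fintype.card_prod, ZMod.card]
      have hcardK : Fintype.card K ≤ N := by
        have h1 : 1 ≤ Fintype.card K := Fintype.card_pos
        have h4 : 4 * Fintype.card K ≤ 2 ^ k * 2 ^ k * Fintype.card K :=
          Nat.mul_le_mul_right _ (by nlinarith)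
        omega
      -- hypotheses for K
      set b' : K →+ K →+ AddCircle (1 : ℚ) :=
        ((b.comp K.subtype).flip.comp K.subtype).flip with hb'def
      have hb' : ∀ u w : K, b' u w = b u w := fun u w => rfl
      have hG' : ∀ u : K, ∃ j : ℕ, 2 ^ j • u = 0 := by
        intro u
        exact ⟨k, Subtype.ext (by push_cast; exact hsmul (u : G))⟩
      have hnd' : ∀ u : K, (∀ w : K, b' u w = 0) → u = 0 := by
        intro u hu
        have hcu : (u : G) = 0 := by
          apply hnd
          intro g
          obtain ⟨⟨⟨a, c⟩, w⟩, rfl⟩ := hsurj g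
          obtain ⟨a', rfl⟩ := ZMod.intCast_surjective a
          obtain ⟨c', rfl⟩ := ZMod.intCast_surjective c
          rw [hfapp, hρ, map_add, map_add, map_zsmul, map_zsmul]
          have hux : b (u : G) x = 0 := by
            rw [hskew, ((hKmem u).mp u.2).1, neg_zero]
          have huy : b (u : G) y = 0 := by
            rw [hskew, ((hKmem u).mp u.2).2, neg_zero]
          rw [hux, huy]
          have := hu w
          rw [hb'] at this
          simp [this]
        exact Subtype.ext (by simpa using hcu)
      have hskew' : ∀ u w : K, b' w u = - b' u w := fun u w => hskew (u : G) (w : G)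
      have halt' : ∀ u : K, b' u u = 0 := fun u => halt (u : G)
      obtain ⟨⟨A, instA, ⟨eA⟩⟩, ⟨m, hm⟩⟩ := ih K hcardK hG' b' hnd' hskew' halt'
      constructor
      · refine ⟨ZMod (2 ^ k) × A, inferInstance, ⟨?_⟩⟩
        exact (e.symm.trans ((AddEquiv.refl (ZMod (2 ^ k) × ZMod (2 ^ k))).prodCongr eA)).trans
          (AddEquiv.prodProdProdComm (ZMod (2 ^ k)) (ZMod (2 ^ k)) A A)
      · exact ⟨2 ^ k * m, by rw [hcardG, hm]; ring⟩

theorem stmt12 (G : Type) [AddCommGroup G] [Fintype G]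
    (hG : ∀ x : G, ∃ k : ℕ, 2 ^ k • x = 0)
    (b : G →+ G →+ AddCircle (1 : ℚ))
    (hnd : ∀ x : G, (∀ y : G, b x y = 0) → x = 0)
    (hskew : ∀ x y : G, b y x = - b x y)
    (halt : ∀ x : G, b x x = 0) :
    (∃ (A : Type) (_ : AddCommGroup A), Nonempty (G ≃+ A × A)) ∧
    IsSquare (Fintype.card G) := by
  exact key_step (Fintype.card G) G le_rfl hG b hnd hskew halt
end

section
/- Let H be a free ℤ_2-module of finite rank, σ an automorphism of H, and (,) a perfect σ-invariant symmetric bilinear form whose restriction to H⁰ = (H^σ)^⊥ is even ((x,x) ∈ 2ℤ_2 for all x ∈ H⁰). Then for every torsion element a of H/(1−σ)H, the pairing value (a,a)_B vanishes, where (a,a)_B = (u,v) mod ℤ_2 with a = u mod (1−σ)H, v ∈ H⊗ℚ_2, v − σv ∈ H, and a = (v−σv) mod (1−σ)H. -/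
open TensorProduct

theorem stmt17
    (H : Type*) [AddCommGroup H] [Module ℤ_[2] H]
    [Module.Free ℤ_[2] H] [Module.Finite ℤ_[2] H]
    (σ : H ≃ₗ[ℤ_[2]] H)
    (B : H →ₗ[ℤ_[2]] H →ₗ[ℤ_[2]] ℤ_[2])
    (hsymm : ∀ x y : H, B x y = B y x)
    (hinv : ∀ x y : H, B (σ x) (σ y) = B x y)
    (hperf : Function.Bijective fun x : H => B x)
    -- the restriction of the form to `H⁰ = (H^σ)^⊥` is even
    (heven : ∀ x : H, (∀ y : H, σ y = y → B x y = 0) → ∃ c : ℤ_[2], B x x = 2 * c) :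
    -- then `(a,a)_B = 0` for every torsion element `a` of `H/(1−σ)H`
    ∀ (a : H ⧸ LinearMap.range (LinearMap.id - σ.toLinearMap)),
      (∃ k : ℕ, 2 ^ k • a = 0) →
      ∀ (u : H) (v : ℚ_[2] ⊗[ℤ_[2]] H) (h : H),
        Submodule.Quotient.mk u = a →
        v - LinearMap.baseChange ℚ_[2] σ.toLinearMap v = (1 : ℚ_[2]) ⊗ₜ[ℤ_[2]] h →
        Submodule.Quotient.mk h = a →
        ∃ c : ℤ_[2],
          LinearMap.BilinForm.baseChange ℚ_[2] B ((1 : ℚ_[2]) ⊗ₜ[ℤ_[2]] u) v =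
            (c : ℚ_[2]) := by
  intro a _ u v h hu hvh hh
  set Bq := LinearMap.BilinForm.baseChange ℚ_[2] B with hBqdef
  set S := LinearMap.baseChange ℚ_[2] σ.toLinearMap with hSdef
  set S' := LinearMap.baseChange ℚ_[2] σ.symm.toLinearMap with hS'def
  -- basic tmul formulas
  have tm : ∀ x y : H, Bq ((1:ℚ_[2]) ⊗ₜ[ℤ_[2]] x) ((1:ℚ_[2]) ⊗ₜ[ℤ_[2]] y)
      = ((B x y : ℤ_[2]) : ℚ_[2]) := by
    intro x y
    rw [hBqdef, LinearMap.BilinForm.baseChange_tmul]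
    rw [Algebra.smul_def, PadicInt.algebraMap_apply]
    ring
  have Stm : ∀ (q : ℚ_[2]) (x : H), S (q ⊗ₜ[ℤ_[2]] x) = q ⊗ₜ[ℤ_[2]] (σ x) := by
    intro q x; rw [hSdef, LinearMap.baseChange_tmul]; rfl
  have S'tm : ∀ (q : ℚ_[2]) (x : H), S' (q ⊗ₜ[ℤ_[2]] x) = q ⊗ₜ[ℤ_[2]] (σ.symm x) := by
    intro q x; rw [hS'def, LinearMap.baseChange_tmul]; rfl
  -- S' is a two-sided inverse of S
  have hS'S : ∀ x, S' (S x) = x := by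
    intro x
    have hc : S'.comp S = LinearMap.id := by
      rw [hSdef, hS'def, ← LinearMap.baseChange_comp]
      have : σ.symm.toLinearMap.comp σ.toLinearMap = LinearMap.id := by
        ext y; simp
      rw [this, LinearMap.baseChange_id]
    simpa using LinearMap.congr_fun hc x
  have hSS' : ∀ x, S (S' x) = x := by
    intro x
    have hc : S.comp S' = LinearMap.id := by
      rw [hSdef, hS'def, ← LinearMap.baseChange_comp]
      have : σ.toLinearMap.comp σ.symm.toLinearMap = LinearMap.id := by
        ext y; simp
      rw [this, LinearMap.baseChange_id]
    simpa using LinearMap.congr_fun hc x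
  -- symmetry of Bq
  have hq_symm : ∀ x y, Bq x y = Bq y x := by
    intro x y
    induction x using TensorProduct.induction_on with
    | zero => simp
    | tmul a m =>
      induction y using TensorProduct.induction_on with
      | zero => simp
      | tmul b n =>
        rw [hBqdef, LinearMap.BilinForm.baseChange_tmul,
          LinearMap.BilinForm.baseChange_tmul, hsymm, mul_comm]
      | add y1 y2 h1 h2 => simp only [map_add, LinearMap.add_apply, h1, h2]
    | add x1 x2 h1 h2 => simp only [map_add, LinearMap.add_apply, h1, h2]
  -- invariance of Bq
  have hq_inv : ∀ x y, Bq (S x) (S y) = Bq x y := by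
    intro x y
    induction x using TensorProduct.induction_on with
    | zero => simp
    | tmul a m =>
      induction y using TensorProduct.induction_on with
      | zero => simp
      | tmul b n =>
        rw [hSdef, LinearMap.baseChange_tmul, LinearMap.baseChange_tmul, hBqdef,
          LinearMap.BilinForm.baseChange_tmul, LinearMap.BilinForm.baseChange_tmul]
        simp only [LinearEquiv.coe_coe, hinv]
      | add y1 y2 h1 h2 => simp only [map_add, h1, h2]
    | add x1 x2 h1 h2 => simp only [map_add, LinearMap.add_apply, h1, h2]
  -- u - h ∈ (1 - σ) H
  have hmem : u - h ∈ LinearMap.range (LinearMap.id - σ.toLinearMap) :=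
    (Submodule.Quotient.eq _).mp (hu.trans hh.symm)
  obtain ⟨w, hw⟩ := hmem
  have hw' : u - h = w - σ w := by
    rw [← hw]; simp
  -- h is orthogonal to the fixed submodule
  have hperp : ∀ y : H, σ y = y → B h y = 0 := by
    intro y hy
    have h1 : Bq ((1:ℚ_[2]) ⊗ₜ[ℤ_[2]] h) ((1:ℚ_[2]) ⊗ₜ[ℤ_[2]] y) = 0 := by
      rw [← hvh]
      have e1 : Bq (S v) ((1:ℚ_[2]) ⊗ₜ[ℤ_[2]] y) = Bq v ((1:ℚ_[2]) ⊗ₜ[ℤ_[2]] y) := by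
        conv_lhs => rw [show (1:ℚ_[2]) ⊗ₜ[ℤ_[2]] y = S ((1:ℚ_[2]) ⊗ₜ[ℤ_[2]] y) by
          rw [Stm, hy]]
        exact hq_inv v ((1:ℚ_[2]) ⊗ₜ[ℤ_[2]] y)
      simp only [map_sub, LinearMap.sub_apply, e1, sub_self]
    rw [tm, PadicInt.coe_eq_zero] at h1
    exact h1
  obtain ⟨c, hc⟩ := heven h hperp
  -- 2 * Bq (1⊗h) v = B h h
  have h2 : (2:ℚ_[2]) * Bq ((1:ℚ_[2]) ⊗ₜ[ℤ_[2]] h) v = ((B h h : ℤ_[2]) : ℚ_[2]) := by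
    have e2 : ((B h h : ℤ_[2]) : ℚ_[2])
        = Bq ((1:ℚ_[2]) ⊗ₜ[ℤ_[2]] h) ((1:ℚ_[2]) ⊗ₜ[ℤ_[2]] h) := (tm h h).symm
    rw [e2, ← hvh]
    have i1 := hq_inv v v
    have i2 := hq_symm v (S v)
    simp only [map_sub, LinearMap.sub_apply]
    linear_combination i2 - i1
  -- Bq (1⊗h) v = c
  have key1 : Bq ((1:ℚ_[2]) ⊗ₜ[ℤ_[2]] h) v = (c : ℚ_[2]) := by
    have : (2:ℚ_[2]) * Bq ((1:ℚ_[2]) ⊗ₜ[ℤ_[2]] h) v = 2 * (c : ℚ_[2]) := by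
      have two_cast : ((2:ℤ_[2]):ℚ_[2]) = 2 := by
        rw [show (2:ℤ_[2]) = ((2:ℕ):ℤ_[2]) by norm_cast, PadicInt.coe_natCast]
        norm_num
      rw [h2, hc, PadicInt.coe_mul, two_cast]
    exact mul_left_cancel₀ two_ne_zero this
  -- Bq (1⊗(u-h)) v = - B w (σ⁻¹ h)
  have key2 : Bq ((1:ℚ_[2]) ⊗ₜ[ℤ_[2]] (u - h)) v
      = ((- B w (σ.symm h) : ℤ_[2]) : ℚ_[2]) := by
    have e3 : (1:ℚ_[2]) ⊗ₜ[ℤ_[2]] (u - h)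
        = (1:ℚ_[2]) ⊗ₜ[ℤ_[2]] w - S ((1:ℚ_[2]) ⊗ₜ[ℤ_[2]] w) := by
      rw [Stm, hw', TensorProduct.tmul_sub]
    have e4 : Bq (S ((1:ℚ_[2]) ⊗ₜ[ℤ_[2]] w)) v = Bq ((1:ℚ_[2]) ⊗ₜ[ℤ_[2]] w) (S' v) := by
      conv_lhs => rw [show v = S (S' v) from (hSS' v).symm]
      exact hq_inv _ _
    have e5 : v - S' v = - ((1:ℚ_[2]) ⊗ₜ[ℤ_[2]] (σ.symm h)) := by
      have : S' (v - S v) = S' v - v := by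
        rw [map_sub, hS'S]
      rw [hvh, S'tm] at this
      rw [this, neg_sub]
    rw [e3, map_sub, LinearMap.sub_apply, e4, ← map_sub, e5, map_neg, tm]
    push_cast
    ring
  refine ⟨c + (- B w (σ.symm h)), ?_⟩
  have e6 : (1:ℚ_[2]) ⊗ₜ[ℤ_[2]] u
      = (1:ℚ_[2]) ⊗ₜ[ℤ_[2]] h + (1:ℚ_[2]) ⊗ₜ[ℤ_[2]] (u - h) := by
    rw [← TensorProduct.tmul_add]
    congr 1
    abel
  rw [e6, map_add, LinearMap.add_apply, key1, key2]
  push_cast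
  ring
end
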